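/- arXiv:2508.15142 — 8 statements merged into one kernel-verified Lean document; each statement's English description precedes it below -/
import Mathlib

section
/- Let f, f̄, H: ℝ^{2d}\{0} → ℝ be smooth, positively homogeneous of degree one, with H > 0 on ℝ^{2d}\{0}. Assume: (a) the normal Gauss maps G and Ḡ of M = {f = 1} and M̄ = {f̄ = 1} are bijections onto the unit sphere S^{2d−1}; (b) Ḡ^{-1}(v) = G^{-1}(v) − G^{-1}(−v) for every unit vector v (M̄ is the central symmetrization of M); (c) H(J∇f̄(q)) = 1 and J∇H(J∇f̄(q)) = −q for every q ∈ M̄ (the unit level set of H is the symplectic polar of M̄). For x ≠ 0 set n_+(x) := G^{-1}(−Jx/|x|) and n_-(x) := G^{-1}(Jx/|x|), and define V(x) := 2(n_+(x) − n_-(x)). Then V(x) = −2·J∇H(x) = −2·X_H(x); in particular V is positively homogeneous of degree zero, i.e., V(cx) = V(x) for all c > 0. -/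
open scoped RealInnerProductSpace


lemma fderiv_zero_homog {E : Type*} [NormedAddCommGroup E] [NormedSpace ℝ E]
    (H : E → ℝ) (hHs : ContDiffOn ℝ (⊤ : ℕ∞) H {(0 : E)}ᶜ)
    (hHhom : ∀ c : ℝ, 0 < c → ∀ x : E, x ≠ 0 → H (c • x) = c * H x)
    (c : ℝ) (hc : 0 < c) (x : E) (hx : x ≠ 0) :
    fderiv ℝ H (c • x) = fderiv ℝ H x := by
  have hop : IsOpen ({(0 : E)}ᶜ) := isOpen_compl_singleton
  have hcx : c • x ≠ 0 := smul_ne_zero hc.ne' hx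
  have hdx : DifferentiableAt ℝ H x :=
    (hHs.contDiffAt (hop.mem_nhds hx)).differentiableAt (by simp)
  have hdcx : DifferentiableAt ℝ H (c • x) :=
    (hHs.contDiffAt (hop.mem_nhds hcx)).differentiableAt (by simp)
  have h1 : HasFDerivAt (fun y => H (c • y))
      ((fderiv ℝ H (c • x)).comp (c • ContinuousLinearMap.id ℝ E)) x :=
    hdcx.hasFDerivAt.comp x ((hasFDerivAt_id x).const_smul c)
  have h2 : HasFDerivAt (fun y => c • H y) (c • fderiv ℝ H x) x :=
    hdx.hasFDerivAt.const_smul c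
  have heq : (fun y => c • H y) =ᶠ[nhds x] (fun y => H (c • y)) := by
    filter_upwards [hop.mem_nhds hx] with y hy
    simpa [smul_eq_mul] using (hHhom c hc y hy).symm
  have h3 : HasFDerivAt (fun y => H (c • y)) (c • fderiv ℝ H x) x :=
    h2.congr_of_eventuallyEq heq.symm
  have h4 : (fderiv ℝ H (c • x)).comp (c • ContinuousLinearMap.id ℝ E)
      = c • fderiv ℝ H x := h1.unique h3
  ext v
  have := congrArg (fun L : E →L[ℝ] ℝ => L v) h4
  simp only [ContinuousLinearMap.comp_apply, ContinuousLinearMap.smul_apply,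
    ContinuousLinearMap.id_apply, map_smul, smul_eq_mul] at this
  exact mul_left_cancel₀ hc.ne' this

lemma gradient_zero_homog {d : ℕ}
    (H : EuclideanSpace ℝ (Fin d) → ℝ)
    (hHs : ContDiffOn ℝ (⊤ : ℕ∞) H {(0 : EuclideanSpace ℝ (Fin d))}ᶜ)
    (hHhom : ∀ c : ℝ, 0 < c → ∀ x : EuclideanSpace ℝ (Fin d), x ≠ 0 →
      H (c • x) = c * H x)
    (c : ℝ) (hc : 0 < c) (x : EuclideanSpace ℝ (Fin d)) (hx : x ≠ 0) :
    gradient H (c • x) = gradient H x := by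
  unfold gradient
  rw [fderiv_zero_homog H hHs hHhom c hc x hx]

/-- Let `f, f̄, H : ℝ^{2d}\{0} → ℝ` be smooth, positively 1-homogeneous,
with `H > 0` away from `0`.  Assume: (a) the normal Gauss maps of `M = {f = 1}` and
`M̄ = {f̄ = 1}` are bijections onto the unit sphere, with (two-sided) inverses `Ginv` and
`Gbarinv`; (b) `Gbarinv v = Ginv v − Ginv (−v)` for every unit vector `v` (`M̄` is the
central symmetrization of `M`); (c) `H (J ∇f̄ q) = 1` and `J ∇H (J ∇f̄ q) = −q` for every
`q ∈ M̄` (the unit level set of `H` is the symplectic polar of `M̄`).  For `x ≠ 0` set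
`n₊(x) := Ginv (−Jx/‖x‖)`, `n₋(x) := Ginv (Jx/‖x‖)` and `V(x) := 2 (n₊(x) − n₋(x))`.
Then `V(x) = −2 J ∇H(x) = −2 X_H(x)`; in particular `V` is positively homogeneous of
degree zero: `V (c • x) = V x` for all `c > 0`. -/
theorem stmt6 {d : ℕ}
    (J : EuclideanSpace ℝ (Fin (2 * d)) →ₗᵢ[ℝ] EuclideanSpace ℝ (Fin (2 * d)))
    (hJ : ∀ v, J (J v) = -v)
    (f fbar H : EuclideanSpace ℝ (Fin (2 * d)) → ℝ)
    (hfs : ContDiffOn ℝ (⊤ : ℕ∞) f {(0 : EuclideanSpace ℝ (Fin (2 * d)))}ᶜ)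
    (hfbars : ContDiffOn ℝ (⊤ : ℕ∞) fbar {(0 : EuclideanSpace ℝ (Fin (2 * d)))}ᶜ)
    (hHs : ContDiffOn ℝ (⊤ : ℕ∞) H {(0 : EuclideanSpace ℝ (Fin (2 * d)))}ᶜ)
    (hfhom : ∀ c : ℝ, 0 < c → ∀ x : EuclideanSpace ℝ (Fin (2 * d)), x ≠ 0 →
      f (c • x) = c * f x)
    (hfbarhom : ∀ c : ℝ, 0 < c → ∀ x : EuclideanSpace ℝ (Fin (2 * d)), x ≠ 0 →
      fbar (c • x) = c * fbar x)
    (hHhom : ∀ c : ℝ, 0 < c → ∀ x : EuclideanSpace ℝ (Fin (2 * d)), x ≠ 0 →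
      H (c • x) = c * H x)
    (hHpos : ∀ x : EuclideanSpace ℝ (Fin (2 * d)), x ≠ 0 → 0 < H x)
    (Ginv Gbarinv : EuclideanSpace ℝ (Fin (2 * d)) → EuclideanSpace ℝ (Fin (2 * d)))
    (hGinv_mem : ∀ u : EuclideanSpace ℝ (Fin (2 * d)), ‖u‖ = 1 →
      Ginv u ≠ 0 ∧ f (Ginv u) = 1)
    (hGinv_right : ∀ u : EuclideanSpace ℝ (Fin (2 * d)), ‖u‖ = 1 →
      ‖gradient f (Ginv u)‖⁻¹ • gradient f (Ginv u) = u)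
    (hGinv_left : ∀ q : EuclideanSpace ℝ (Fin (2 * d)), q ≠ 0 → f q = 1 →
      Ginv (‖gradient f q‖⁻¹ • gradient f q) = q)
    (hGbarinv_mem : ∀ u : EuclideanSpace ℝ (Fin (2 * d)), ‖u‖ = 1 →
      Gbarinv u ≠ 0 ∧ fbar (Gbarinv u) = 1)
    (hGbarinv_right : ∀ u : EuclideanSpace ℝ (Fin (2 * d)), ‖u‖ = 1 →
      ‖gradient fbar (Gbarinv u)‖⁻¹ • gradient fbar (Gbarinv u) = u)
    (hGbarinv_left : ∀ q : EuclideanSpace ℝ (Fin (2 * d)), q ≠ 0 → fbar q = 1 →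
      Gbarinv (‖gradient fbar q‖⁻¹ • gradient fbar q) = q)
    (hsymm : ∀ u : EuclideanSpace ℝ (Fin (2 * d)), ‖u‖ = 1 →
      Gbarinv u = Ginv u - Ginv (-u))
    (hpolar1 : ∀ q : EuclideanSpace ℝ (Fin (2 * d)), q ≠ 0 → fbar q = 1 →
      H (J (gradient fbar q)) = 1)
    (hpolar2 : ∀ q : EuclideanSpace ℝ (Fin (2 * d)), q ≠ 0 → fbar q = 1 →
      J (gradient H (J (gradient fbar q))) = -q) :
    ∀ x : EuclideanSpace ℝ (Fin (2 * d)), x ≠ 0 →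
      (2 : ℝ) • (Ginv (-(‖x‖⁻¹ • J x)) - Ginv (‖x‖⁻¹ • J x))
          = -((2 : ℝ) • J (gradient H x)) ∧
      ∀ c : ℝ, 0 < c →
        (2 : ℝ) • (Ginv (-(‖c • x‖⁻¹ • J (c • x))) - Ginv (‖c • x‖⁻¹ • J (c • x)))
          = (2 : ℝ) • (Ginv (-(‖x‖⁻¹ • J x)) - Ginv (‖x‖⁻¹ • J x)) := by
  intro x hx
  have hxn : (0 : ℝ) < ‖x‖ := norm_pos_iff.2 hx
  set u : EuclideanSpace ℝ (Fin (2 * d)) := ‖x‖⁻¹ • J x with hu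
  have hunorm : ‖u‖ = 1 := by
    rw [hu, norm_smul, J.norm_map]
    simp [abs_of_pos (inv_pos.2 hxn), inv_mul_cancel₀ hxn.ne']
  have hmunorm : ‖-u‖ = 1 := by rwa [norm_neg]
  constructor
  · -- main identity
    set q := Gbarinv (-u) with hq
    obtain ⟨hq0, hqf⟩ := hGbarinv_mem (-u) hmunorm
    set g := gradient fbar q with hg
    have hgr : ‖g‖⁻¹ • g = -u := hGbarinv_right (-u) hmunorm
    have hg0 : g ≠ 0 := by
      intro h
      rw [h] at hgr
      simp only [smul_zero] at hgr
      have hu0 : u = 0 := by simpa using hgr.symm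
      rw [hu0, norm_zero] at hunorm
      norm_num at hunorm
    have hgn : (0 : ℝ) < ‖g‖ := norm_pos_iff.2 hg0
    have hgeq : g = ‖g‖ • (-u) := by
      rw [← hgr, smul_smul, mul_inv_cancel₀ hgn.ne', one_smul]
    -- J g = (‖g‖ * ‖x‖⁻¹) • x
    have hJg : J g = (‖g‖ * ‖x‖⁻¹) • x := by
      calc J g = J (‖g‖ • -(‖x‖⁻¹ • J x)) := by rw [← hgeq]
        _ = ‖g‖ • -(‖x‖⁻¹ • J (J x)) := by rw [map_smul, map_neg, map_smul]
        _ = (‖g‖ * ‖x‖⁻¹) • x := by rw [hJ]; module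
    set lam : ℝ := ‖g‖ * ‖x‖⁻¹ with hlam
    have hlampos : 0 < lam := mul_pos hgn (inv_pos.2 hxn)
    have hgradeq : gradient H (J g) = gradient H x := by
      rw [hJg]
      exact gradient_zero_homog H hHs hHhom lam hlampos x hx
    have hp2 := hpolar2 q hq0 hqf
    rw [← hg, hgradeq] at hp2
    -- hp2 : J (gradient H x) = -q
    have hqval : q = Ginv (-u) - Ginv (- -u) := hsymm (-u) hmunorm
    rw [neg_neg] at hqval
    rw [hp2, hqval]
    module
  · -- homogeneity
    intro c hc
    have hkey : ‖c • x‖⁻¹ • J (c • x) = ‖x‖⁻¹ • J x := by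
      rw [norm_smul, map_smul, Real.norm_eq_abs, abs_of_pos hc, mul_inv,
        smul_smul]
      ring_nf
      rw [mul_comm c c⁻¹, inv_mul_cancel₀ hc.ne']
      simp [smul_smul]
    rw [hkey]
end

section
/- Let V: ℝ^n\{0} → ℝ^n be a C² vector field that is positively homogeneous of degree zero (V(cx) = V(x) for c > 0), and let φ be a flow of V (φ(0,x) = x, ∂_t φ(t,x) = V(φ(t,x))) whose trajectories stay in ℝ^n\{0}, with φ(s, x) defined for all s ∈ [0,1] and all x of sufficiently large norm. Then there exist constants C̃ > 0 and δ̃ > 0 such that for every x with |x| ≥ 1/δ̃ one has |φ(1, x) − x − V(x)| ≤ C̃ / |x|. -/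
/-!
A degree-zero homogeneous field is bounded by its sup `M` on the unit sphere, and its
derivative, being homogeneous of degree `-1`, is bounded by `L / ‖y‖`. For large `‖x‖` the
trajectory from `x` stays in the ball of radius `M ≤ ‖x‖ / 2` around `x` up to time `1`, where
`V` varies by at most `2 L M / ‖x‖`; the mean value inequality for `t ↦ φ t x - t • V x` then
gives the estimate.
-/

open Set Metric

section Homogeneous

variable {E F : Type*} [NormedAddCommGroup E] [NormedSpace ℝ E]
  [NormedAddCommGroup F]

theorem exists_norm_le_of_homogeneous [ProperSpace E] {f : E → F}
    (hf : ContinuousOn f {0}ᶜ)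
    (hhom : ∀ c : ℝ, 0 < c → ∀ x : E, x ≠ 0 → f (c • x) = f x) :
    ∃ M, 0 ≤ M ∧ ∀ y : E, y ≠ 0 → ‖f y‖ ≤ M := by
  have hsphere : sphere (0 : E) 1 ⊆ {0}ᶜ := fun y hy => ne_of_mem_sphere hy one_ne_zero
  obtain ⟨C, hC⟩ := (isCompact_sphere (0 : E) 1).exists_bound_of_continuousOn (hf.mono hsphere)
  refine ⟨max C 0, le_max_right _ _, fun y hy => ?_⟩
  rw [← hhom ‖y‖⁻¹ (by positivity) y hy]
  refine (hC _ ?_).trans (le_max_left _ _)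
  rw [mem_sphere_zero_iff_norm, norm_smul, norm_inv, norm_norm,
    inv_mul_cancel₀ (norm_ne_zero_iff.2 hy)]

theorem fderiv_eq_smul_fderiv_smul_of_homogeneous [NormedSpace ℝ F] {f : E → F}
    (hhom : ∀ c : ℝ, 0 < c → ∀ x : E, x ≠ 0 → f (c • x) = f x) {c : ℝ} (hc : 0 < c) {x : E}
    (hx : x ≠ 0) : fderiv ℝ f x = c • fderiv ℝ f (c • x) := by
  rw [← fderiv_comp_smul]
  refine (Filter.EventuallyEq.fderiv_eq ?_).symm
  filter_upwards [isOpen_compl_singleton.mem_nhds hx] with y hy using hhom c hc y hy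

theorem exists_norm_fderiv_le_of_homogeneous [NormedSpace ℝ F] [ProperSpace E] {f : E → F}
    (hf : ContDiffOn ℝ 1 f {0}ᶜ)
    (hhom : ∀ c : ℝ, 0 < c → ∀ x : E, x ≠ 0 → f (c • x) = f x) :
    ∃ L, 0 ≤ L ∧ ∀ y : E, y ≠ 0 → ‖fderiv ℝ f y‖ ≤ L / ‖y‖ := by
  have hcont : ContinuousOn (fun y : E => ‖y‖ • fderiv ℝ f y) {0}ᶜ :=
    continuous_norm.continuousOn.smul
      (hf.continuousOn_fderiv_of_isOpen isOpen_compl_singleton le_rfl)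
  have hhom' : ∀ c : ℝ, 0 < c → ∀ x : E, x ≠ 0 →
      ‖c • x‖ • fderiv ℝ f (c • x) = ‖x‖ • fderiv ℝ f x := by
    intro c hc x hx
    rw [fderiv_eq_smul_fderiv_smul_of_homogeneous hhom hc hx, norm_smul,
      Real.norm_of_nonneg hc.le, smul_smul, mul_comm]
  obtain ⟨L, hL, hbound⟩ := exists_norm_le_of_homogeneous hcont hhom'
  refine ⟨L, hL, fun y hy => ?_⟩
  rw [le_div_iff₀' (norm_pos_iff.2 hy)]
  simpa only [norm_smul, norm_norm] using hbound y hy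

end Homogeneous

theorem norm_sub_le_of_norm_fderiv_le_div_norm {E F : Type*} [NormedAddCommGroup E]
    [NormedSpace ℝ E] [NormedAddCommGroup F] [NormedSpace ℝ F] {f : E → F} {L : ℝ}
    (hf : ∀ z : E, z ≠ 0 → DifferentiableAt ℝ f z)
    (hL : ∀ z : E, z ≠ 0 → ‖fderiv ℝ f z‖ ≤ L / ‖z‖) {x y : E} (hx : x ≠ 0)
    (hy : ‖y - x‖ ≤ ‖x‖ / 2) : ‖f y - f x‖ ≤ 2 * L / ‖x‖ * ‖y - x‖ := by
  have hx' : 0 < ‖x‖ := norm_pos_iff.2 hx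
  have hnorm : ∀ z ∈ closedBall x (‖x‖ / 2), ‖x‖ / 2 ≤ ‖z‖ := by
    intro z hz
    rw [mem_closedBall, dist_eq_norm] at hz
    linarith [norm_sub_norm_le x z, norm_sub_rev x z]
  have hne : ∀ z ∈ closedBall x (‖x‖ / 2), z ≠ 0 := fun z hz =>
    norm_pos_iff.1 ((half_pos hx').trans_le (hnorm z hz))
  refine (convex_closedBall x (‖x‖ / 2)).norm_image_sub_le_of_norm_hasFDerivWithin_le
    (fun z hz => (hf z (hne z hz)).hasFDerivAt.hasFDerivWithinAt) (fun z hz => ?_)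
    (mem_closedBall_self (by positivity)) (by rwa [mem_closedBall, dist_eq_norm])
  calc ‖fderiv ℝ f z‖ ≤ L / ‖z‖ := hL z (hne z hz)
    _ ≤ L / (‖x‖ / 2) := by
        have hL0 : 0 ≤ L := by
          have h := (norm_nonneg _).trans (hL z (hne z hz))
          rwa [le_div_iff₀ (norm_pos_iff.2 (hne z hz)), zero_mul] at h
        gcongr
        exact hnorm z hz
    _ = 2 * L / ‖x‖ := by field_simp

theorem norm_sub_sub_le_of_norm_deriv_sub_le_segment_01 {E : Type*} [NormedAddCommGroup E]
    [NormedSpace ℝ E] {f f' : ℝ → E} {w : E} {C : ℝ}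
    (hf : ∀ s ∈ Icc (0 : ℝ) 1, HasDerivAt f (f' s) s)
    (bound : ∀ s ∈ Icc (0 : ℝ) 1, ‖f' s - w‖ ≤ C) : ‖f 1 - f 0 - w‖ ≤ C := by
  have hg : ∀ s ∈ Icc (0 : ℝ) 1,
      HasDerivWithinAt (fun t => f t - t • w) (f' s - w) (Icc 0 1) s := fun s hs =>
    ((hf s hs).sub (by simpa using (hasDerivAt_id s).smul_const w)).hasDerivWithinAt
  simpa [sub_right_comm] using
    norm_image_sub_le_of_norm_deriv_le_segment_01' hg
      fun s hs => bound s (Ico_subset_Icc_self hs)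

theorem stmt8_general {n : ℕ} (V : EuclideanSpace ℝ (Fin n) → EuclideanSpace ℝ (Fin n))
    (hV : ContDiffOn ℝ 2 V {(0 : EuclideanSpace ℝ (Fin n))}ᶜ)
    (hhom : ∀ c : ℝ, 0 < c → ∀ x : EuclideanSpace ℝ (Fin n), x ≠ 0 → V (c • x) = V x)
    (φ : ℝ → EuclideanSpace ℝ (Fin n) → EuclideanSpace ℝ (Fin n))
    (ρ : ℝ)
    (hφ0 : ∀ x : EuclideanSpace ℝ (Fin n), ρ ≤ ‖x‖ → φ 0 x = x)
    (hφd : ∀ x : EuclideanSpace ℝ (Fin n), ρ ≤ ‖x‖ → ∀ s ∈ Set.Icc (0 : ℝ) 1,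
      HasDerivAt (fun t => φ t x) (V (φ s x)) s)
    (hφne : ∀ x : EuclideanSpace ℝ (Fin n), ρ ≤ ‖x‖ → ∀ s ∈ Set.Icc (0 : ℝ) 1,
      φ s x ≠ 0) :
    ∃ Ctilde : ℝ, 0 < Ctilde ∧ ∃ δtilde : ℝ, 0 < δtilde ∧
      ∀ x : EuclideanSpace ℝ (Fin n), 1 / δtilde ≤ ‖x‖ →
        ‖φ 1 x - x - V x‖ ≤ Ctilde / ‖x‖ := by
  have hV1 : ContDiffOn ℝ 1 V {0}ᶜ := hV.of_le one_le_two
  have hVdiff : ∀ z, z ≠ 0 → DifferentiableAt ℝ V z := fun z hz =>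
    (hV1.contDiffAt (isOpen_compl_singleton.mem_nhds hz)).differentiableAt one_ne_zero
  obtain ⟨M, hM, hVM⟩ := exists_norm_le_of_homogeneous hV1.continuousOn hhom
  obtain ⟨L, hL, hVL⟩ := exists_norm_fderiv_le_of_homogeneous hV1 hhom
  refine ⟨2 * L * M + 1, by nlinarith [mul_nonneg hL hM], 1 / max ρ (2 * M + 1),
    one_div_pos.2 (lt_max_of_lt_right (by linarith)), fun x hx => ?_⟩
  rw [one_div_one_div, max_le_iff] at hx
  obtain ⟨hxρ, hxM⟩ := hx
  have hx0 : x ≠ 0 := norm_pos_iff.1 (by linarith)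
  have hdisp : ∀ s ∈ Icc (0 : ℝ) 1, ‖φ s x - x‖ ≤ M := fun s hs => by
    have := norm_image_sub_le_of_norm_deriv_le_segment'
      (fun t ht => (hφd x hxρ t ht).hasDerivWithinAt)
      (fun t ht => hVM _ (hφne x hxρ t (Ico_subset_Icc_self ht))) s hs
    rw [hφ0 x hxρ] at this
    nlinarith [hs.2]
  have hclose : ∀ s ∈ Icc (0 : ℝ) 1, ‖V (φ s x) - V x‖ ≤ 2 * L * M / ‖x‖ := fun s hs => by
    refine (norm_sub_le_of_norm_fderiv_le_div_norm hVdiff hVL hx0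
      ((hdisp s hs).trans (by linarith))).trans ?_
    rw [mul_div_right_comm (2 * L)]
    exact mul_le_mul_of_nonneg_left (hdisp s hs) (div_nonneg (by linarith) (norm_nonneg _))
  calc ‖φ 1 x - x - V x‖ ≤ 2 * L * M / ‖x‖ := by
        simpa [hφ0 x hxρ] using
          norm_sub_sub_le_of_norm_deriv_sub_le_segment_01 (hφd x hxρ) hclose
    _ ≤ (2 * L * M + 1) / ‖x‖ := by gcongr; linarith

/-- Let `V : ℝ^n\{0} → ℝ^n` be a C² vector field which is positively
homogeneous of degree zero, and let `φ` be a flow of `V` (`φ 0 x = x`,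
`∂ₜ φ(t,x) = V (φ(t,x))`) whose trajectories stay in `ℝ^n\{0}`, with `φ s x` defined for
all `s ∈ [0,1]` and all `x` of sufficiently large norm (`‖x‖ ≥ ρ`).  Then there exist
constants `C̃ > 0` and `δ̃ > 0` such that for every `x` with `‖x‖ ≥ 1/δ̃` one has
`‖φ 1 x − x − V x‖ ≤ C̃ / ‖x‖`. -/
theorem stmt8 {n : ℕ} (V : EuclideanSpace ℝ (Fin n) → EuclideanSpace ℝ (Fin n))
    (hV : ContDiffOn ℝ 2 V {(0 : EuclideanSpace ℝ (Fin n))}ᶜ)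
    (hhom : ∀ c : ℝ, 0 < c → ∀ x : EuclideanSpace ℝ (Fin n), x ≠ 0 → V (c • x) = V x)
    (φ : ℝ → EuclideanSpace ℝ (Fin n) → EuclideanSpace ℝ (Fin n))
    (ρ : ℝ) (hρ : 0 < ρ)
    (hφ0 : ∀ x : EuclideanSpace ℝ (Fin n), ρ ≤ ‖x‖ → φ 0 x = x)
    (hφd : ∀ x : EuclideanSpace ℝ (Fin n), ρ ≤ ‖x‖ → ∀ s ∈ Set.Icc (0 : ℝ) 1,
      HasDerivAt (fun t => φ t x) (V (φ s x)) s)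
    (hφne : ∀ x : EuclideanSpace ℝ (Fin n), ρ ≤ ‖x‖ → ∀ s ∈ Set.Icc (0 : ℝ) 1,
      φ s x ≠ 0) :
    ∃ Ctilde : ℝ, 0 < Ctilde ∧ ∃ δtilde : ℝ, 0 < δtilde ∧
      ∀ x : EuclideanSpace ℝ (Fin n), 1 / δtilde ≤ ‖x‖ →
        ‖φ 1 x - x - V x‖ ≤ Ctilde / ‖x‖ :=
  stmt8_general V hV hhom φ ρ hφ0 hφd hφne
end

section
/- In the outer symplectic billiard setting, there exist constants C > 0 and δ > 0, depending only on M, such that for every x with f(x) > 1 and |x| ≥ 1/δ, writing y = T(x) (which is also exterior to M), the following three estimates hold: (1) |n_-(x) − m_-(x)| ≤ C/|x|; (2) |m_-(y) − n_-(y)| ≤ C/|x|; (3) |n_-(y) − n_+(x)| ≤ C/|x|. -/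
open scoped RealInnerProductSpace NNReal

noncomputable section

/-- The outer symplectic billiard setting: `f : ℝ^{2d}\{0} → ℝ` is smooth and positively
1-homogeneous, the sublevel set `{f ≤ 1}` is a compact convex body containing `0` in its
interior, `∇f ≠ 0` on `M := {f = 1}`, the normal Gauss map
`G : M → S^{2d−1}`, `G q = ∇f q / ‖∇f q‖`, is a bijection (with inverse `Ginv`) such that
both `G` and `Ginv` are Lipschitz, and `m x ∈ M` is the point such that
`m x − x = t • J ∇f (m x)` for some `t > 0`, for every `x` exterior to `M`
(i.e. `f x > 1`).  `J` is a linear isometry with `J ∘ J = −id`, and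
`ω(u,v) = ⟪J u, v⟫` is the standard symplectic form. -/
structure OuterBilliardSetting (d : ℕ) where
  J : EuclideanSpace ℝ (Fin (2 * d)) →ₗᵢ[ℝ] EuclideanSpace ℝ (Fin (2 * d))
  hJ : ∀ v, J (J v) = -v
  f : EuclideanSpace ℝ (Fin (2 * d)) → ℝ
  hf_smooth : ContDiffOn ℝ (⊤ : ℕ∞) f {(0 : EuclideanSpace ℝ (Fin (2 * d)))}ᶜ
  hf_hom : ∀ c : ℝ, 0 < c → ∀ x : EuclideanSpace ℝ (Fin (2 * d)), x ≠ 0 →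
    f (c • x) = c * f x
  hbody_compact : IsCompact {x : EuclideanSpace ℝ (Fin (2 * d)) | f x ≤ 1}
  hbody_convex : Convex ℝ {x : EuclideanSpace ℝ (Fin (2 * d)) | f x ≤ 1}
  hbody_zero : (0 : EuclideanSpace ℝ (Fin (2 * d)))
    ∈ interior {x : EuclideanSpace ℝ (Fin (2 * d)) | f x ≤ 1}
  hgrad_ne : ∀ q : EuclideanSpace ℝ (Fin (2 * d)), f q = 1 → gradient f q ≠ 0
  Ginv : EuclideanSpace ℝ (Fin (2 * d)) → EuclideanSpace ℝ (Fin (2 * d))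
  hGinv_mem : ∀ u : EuclideanSpace ℝ (Fin (2 * d)), ‖u‖ = 1 → f (Ginv u) = 1
  hGinv_right : ∀ u : EuclideanSpace ℝ (Fin (2 * d)), ‖u‖ = 1 →
    ‖gradient f (Ginv u)‖⁻¹ • gradient f (Ginv u) = u
  hGinv_left : ∀ q : EuclideanSpace ℝ (Fin (2 * d)), f q = 1 →
    Ginv (‖gradient f q‖⁻¹ • gradient f q) = q
  KG : ℝ≥0
  KGinv : ℝ≥0
  hG_lip : LipschitzOnWith KG (fun q => ‖gradient f q‖⁻¹ • gradient f q)
    {q : EuclideanSpace ℝ (Fin (2 * d)) | f q = 1}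
  hGinv_lip : LipschitzOnWith KGinv Ginv
    (Metric.sphere (0 : EuclideanSpace ℝ (Fin (2 * d))) 1)
  m : EuclideanSpace ℝ (Fin (2 * d)) → EuclideanSpace ℝ (Fin (2 * d))
  hm_mem : ∀ x : EuclideanSpace ℝ (Fin (2 * d)), 1 < f x → f (m x) = 1
  hm_ray : ∀ x : EuclideanSpace ℝ (Fin (2 * d)), 1 < f x →
    ∃ t : ℝ, 0 < t ∧ m x - x = t • J (gradient f (m x))

namespace OuterBilliardSetting

variable {d : ℕ} (B : OuterBilliardSetting d)

/-- The outer symplectic billiard map `T x = 2 (m x) − x`. -/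
def T (x : EuclideanSpace ℝ (Fin (2 * d))) : EuclideanSpace ℝ (Fin (2 * d)) :=
  (2 : ℝ) • B.m x - x

/-- The point `n₊(x) = G⁻¹(−Jx/‖x‖)` of `M` whose Reeb vector is a positive multiple
of `x`. -/
def nplus (x : EuclideanSpace ℝ (Fin (2 * d))) : EuclideanSpace ℝ (Fin (2 * d)) :=
  B.Ginv (-(‖x‖⁻¹ • B.J x))

/-- The point `n₋(x) = G⁻¹(Jx/‖x‖)` of `M` whose Reeb vector is a positive multiple
of `−x`. -/
def nminus (x : EuclideanSpace ℝ (Fin (2 * d))) : EuclideanSpace ℝ (Fin (2 * d)) :=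
  B.Ginv (‖x‖⁻¹ • B.J x)

/-- The vector field `V x = 2 (n₊ x − n₋ x)`. -/
def V (x : EuclideanSpace ℝ (Fin (2 * d))) : EuclideanSpace ℝ (Fin (2 * d)) :=
  (2 : ℝ) • (B.nplus x - B.nminus x)

end OuterBilliardSetting


namespace OuterBilliardSetting

variable {d : ℕ} (B : OuterBilliardSetting d)

/-- Lipschitz bound for `Ginv` on the unit sphere, in terms of norms. -/
lemma aux_lip {a b : EuclideanSpace ℝ (Fin (2 * d))} (ha : ‖a‖ = 1) (hb : ‖b‖ = 1) :
    ‖B.Ginv a - B.Ginv b‖ ≤ (B.KGinv : ℝ) * ‖a - b‖ := by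
  have h := B.hGinv_lip.dist_le_mul a (by simpa [mem_sphere_zero_iff_norm] using ha)
    b (by simpa [mem_sphere_zero_iff_norm] using hb)
  simpa [dist_eq_norm] using h

/-- Main estimate: `‖n₋ x − m x‖ ≤ KGinv · 2R/‖x‖` for exterior `x`. -/
lemma aux1 {R : ℝ} (hR : ∀ q : EuclideanSpace ℝ (Fin (2 * d)), B.f q ≤ 1 → ‖q‖ ≤ R)
    {x : EuclideanSpace ℝ (Fin (2 * d))} (hx : 1 < B.f x) (hx0 : 0 < ‖x‖) :
    ‖B.nminus x - B.m x‖ ≤ (B.KGinv : ℝ) * (2 * R / ‖x‖) := by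
  set q := B.m x with hqdef
  have hq : B.f q = 1 := B.hm_mem x hx
  have hqR : ‖q‖ ≤ R := hR q hq.le
  obtain ⟨t, ht, hray⟩ := B.hm_ray x hx
  set g := gradient B.f q with hgdef
  have hg : g ≠ 0 := B.hgrad_ne q hq
  have hgn : ‖g‖ ≠ 0 := norm_ne_zero_iff.mpr hg
  set u : EuclideanSpace ℝ (Fin (2 * d)) := ‖g‖⁻¹ • g with hudef
  have hu : ‖u‖ = 1 := by
    rw [hudef, norm_smul, norm_inv, norm_norm, inv_mul_cancel₀ hgn]
  set w : EuclideanSpace ℝ (Fin (2 * d)) := ‖x‖⁻¹ • B.J x with hwdef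
  have hw : ‖w‖ = 1 := by
    rw [hwdef, norm_smul, norm_inv, norm_norm, (B.J).norm_map, inv_mul_cancel₀ hx0.ne']
  have hqinv : q = B.Ginv u := (B.hGinv_left q hq).symm
  have hnm : B.nminus x = B.Ginv w := rfl
  -- the key algebraic identity
  have hJx : B.J x = B.J q + t • g := by
    have h1 : B.J q - B.J x = t • B.J (B.J g) := by
      rw [← map_sub, ← map_smul, hray]
    rw [B.hJ, smul_neg] at h1
    have := sub_eq_iff_eq_add.mp h1
    -- this : B.J q = -(t • g) + B.J x
    rw [this]; abel
  have hgu : (t * ‖g‖) • u = t • g := by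
    rw [hudef, smul_smul, mul_assoc, mul_inv_cancel₀ hgn, mul_one]
  have hwu : w - u = ‖x‖⁻¹ • B.J q + (‖x‖⁻¹ * (t * ‖g‖) - 1) • u := by
    have hw2 : w = ‖x‖⁻¹ • (B.J q + (t * ‖g‖) • u) := by rw [hgu, ← hJx]
    rw [hw2]; module
  have htg : t * ‖g‖ = ‖q - x‖ := by
    rw [hray, norm_smul, (B.J).norm_map, Real.norm_eq_abs, abs_of_pos ht]
  have habs : |‖x‖⁻¹ * (t * ‖g‖) - 1| ≤ ‖x‖⁻¹ * ‖q‖ := by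
    have h2 : |‖q - x‖ - ‖x‖| ≤ ‖q‖ := by
      have := abs_norm_sub_norm_le (q - x) (-x)
      simpa [sub_neg_eq_add] using this
    have h3 : ‖x‖⁻¹ * (t * ‖g‖) - 1 = ‖x‖⁻¹ * (‖q - x‖ - ‖x‖) := by
      rw [htg]; field_simp
    rw [h3, abs_mul, abs_of_nonneg (inv_nonneg.mpr (norm_nonneg x))]
    exact mul_le_mul_of_nonneg_left h2 (inv_nonneg.mpr (norm_nonneg x))
  have hbound : ‖w - u‖ ≤ 2 * R / ‖x‖ := by
    rw [hwu]
    refine (norm_add_le _ _).trans ?_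
    rw [norm_smul, norm_smul, hu, mul_one, norm_inv, norm_norm, (B.J).norm_map,
      Real.norm_eq_abs]
    have : ‖x‖⁻¹ * ‖q‖ + ‖x‖⁻¹ * ‖q‖ ≤ 2 * R / ‖x‖ := by
      rw [div_eq_mul_inv]
      have := mul_le_mul_of_nonneg_left hqR (inv_nonneg.mpr (norm_nonneg x))
      nlinarith [inv_nonneg.mpr (norm_nonneg x)]
    exact le_trans (by linarith [habs]) this
  calc ‖B.nminus x - q‖ = ‖B.Ginv w - B.Ginv u‖ := by rw [hnm, ← hqinv]
    _ ≤ (B.KGinv : ℝ) * ‖w - u‖ := B.aux_lip hw hu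
    _ ≤ (B.KGinv : ℝ) * (2 * R / ‖x‖) :=
        mul_le_mul_of_nonneg_left hbound (B.KGinv).coe_nonneg

end OuterBilliardSetting

set_option maxHeartbeats 1000000

/-- In the outer symplectic billiard setting, there exist constants
`C > 0` and `δ > 0`, depending only on `M`, such that for every `x` with `f x > 1` and
`‖x‖ ≥ 1/δ`, writing `y = T x` (which is also exterior to `M`), the following estimates
hold: (1) `‖n₋ x − m x‖ ≤ C/‖x‖`; (2) `‖m y − n₋ y‖ ≤ C/‖x‖`;
(3) `‖n₋ y − n₊ x‖ ≤ C/‖x‖`. -/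
theorem stmt9 {d : ℕ} (B : OuterBilliardSetting d) :
    ∃ C : ℝ, 0 < C ∧ ∃ δ : ℝ, 0 < δ ∧
      ∀ x : EuclideanSpace ℝ (Fin (2 * d)), 1 < B.f x → 1 / δ ≤ ‖x‖ →
        1 < B.f (B.T x) ∧
        ‖B.nminus x - B.m x‖ ≤ C / ‖x‖ ∧
        ‖B.m (B.T x) - B.nminus (B.T x)‖ ≤ C / ‖x‖ ∧
        ‖B.nminus (B.T x) - B.nplus x‖ ≤ C / ‖x‖ := by
  obtain ⟨R₀, hR₀⟩ := B.hbody_compact.isBounded.subset_closedBall 0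
  set R : ℝ := max R₀ 1 with hRdef
  have hR1 : (1 : ℝ) ≤ R := le_max_right _ _
  have hRpos : (0 : ℝ) < R := lt_of_lt_of_le one_pos hR1
  have hR : ∀ q : EuclideanSpace ℝ (Fin (2 * d)), B.f q ≤ 1 → ‖q‖ ≤ R := by
    intro q hq
    have := hR₀ hq
    rw [Metric.mem_closedBall, dist_zero_right] at this
    exact this.trans (le_max_left _ _)
  set K : ℝ := max (B.KGinv : ℝ) 1 with hKdef
  have hK1 : (1 : ℝ) ≤ K := le_max_right _ _
  have hKG : (B.KGinv : ℝ) ≤ K := le_max_left _ _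
  refine ⟨8 * R * K, by positivity, (4 * R)⁻¹, by positivity, ?_⟩
  intro x hx hxn
  rw [one_div, inv_inv] at hxn
  have hx0 : (0 : ℝ) < ‖x‖ := lt_of_lt_of_le (by positivity) hxn
  have hq : B.f (B.m x) = 1 := B.hm_mem x hx
  have hqR : ‖B.m x‖ ≤ R := hR _ hq.le
  have hTx : B.T x = (2 : ℝ) • B.m x - x := rfl
  have h2q : ‖(2 : ℝ) • B.m x‖ ≤ 2 * R := by
    rw [norm_smul, Real.norm_eq_abs, abs_two]; linarith
  have hy_norm : ‖x‖ - 2 * R ≤ ‖B.T x‖ := by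
    have h1 : ‖x‖ - ‖(2 : ℝ) • B.m x‖ ≤ ‖x - (2 : ℝ) • B.m x‖ := norm_sub_norm_le _ _
    rw [norm_sub_rev] at h1
    rw [hTx]; linarith
  have hy_half : ‖x‖ / 2 ≤ ‖B.T x‖ := by linarith
  have hy0 : (0 : ℝ) < ‖B.T x‖ := by linarith
  have hfy : 1 < B.f (B.T x) := by
    by_contra h
    push_neg at h
    have := hR _ h
    linarith
  have hdivmono : ∀ a b : ℝ, a ≤ b → a / ‖x‖ ≤ b / ‖x‖ := fun a b hab => by
    rw [div_le_div_iff₀ hx0 hx0]; exact mul_le_mul_of_nonneg_right hab hx0.le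
  refine ⟨hfy, ?_, ?_, ?_⟩
  · -- estimate (1)
    refine (B.aux1 hR hx hx0).trans ?_
    have e : (B.KGinv : ℝ) * (2 * R / ‖x‖) = 2 * R * (B.KGinv : ℝ) / ‖x‖ := by ring
    rw [e]
    apply hdivmono
    nlinarith [(B.KGinv).coe_nonneg]
  · -- estimate (2)
    have h1 := B.aux1 hR hfy hy0
    rw [norm_sub_rev] at h1
    refine h1.trans ?_
    have h2 : (B.KGinv : ℝ) * (2 * R / ‖B.T x‖) ≤ K * (2 * R / ‖B.T x‖) :=
      mul_le_mul_of_nonneg_right hKG (by positivity)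
    have h3 : K * (2 * R / ‖B.T x‖) ≤ 8 * R * K / ‖x‖ := by
      rw [show K * (2 * R / ‖B.T x‖) = 2 * R * K / ‖B.T x‖ from by ring,
        div_le_div_iff₀ hy0 hx0]
      nlinarith [mul_le_mul_of_nonneg_left hy_half (by positivity : (0:ℝ) ≤ 4 * R * K),
        mul_pos hRpos (lt_of_lt_of_le one_pos hK1)]
    linarith
  · -- estimate (3)
    set w : EuclideanSpace ℝ (Fin (2 * d)) := ‖B.T x‖⁻¹ • B.J (B.T x) with hwdef
    set v : EuclideanSpace ℝ (Fin (2 * d)) := -(‖x‖⁻¹ • B.J x) with hvdef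
    have hw1 : ‖w‖ = 1 := by
      rw [hwdef, norm_smul, norm_inv, norm_norm, (B.J).norm_map, inv_mul_cancel₀ hy0.ne']
    have hv1 : ‖v‖ = 1 := by
      rw [hvdef, norm_neg, norm_smul, norm_inv, norm_norm, (B.J).norm_map,
        inv_mul_cancel₀ hx0.ne']
    have hJy : B.J (B.T x) = (2 : ℝ) • B.J (B.m x) - B.J x := by
      rw [hTx, map_sub, map_smul]
    have hwv : w - v = (2 * ‖B.T x‖⁻¹) • B.J (B.m x) + (‖x‖⁻¹ - ‖B.T x‖⁻¹) • B.J x := by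
      rw [hwdef, hvdef, hJy]; module
    have hyx : |‖B.T x‖ - ‖x‖| ≤ 2 * R := by
      have h1 : |‖B.T x‖ - ‖-x‖| ≤ ‖B.T x - -x‖ := abs_norm_sub_norm_le _ _
      have h2 : B.T x - -x = (2 : ℝ) • B.m x := by rw [hTx]; module
      rw [norm_neg, h2] at h1
      linarith
    have hbound : ‖w - v‖ ≤ 8 * R / ‖x‖ := by
      rw [hwv]
      refine (norm_add_le _ _).trans ?_
      rw [norm_smul, norm_smul, (B.J).norm_map, (B.J).norm_map, Real.norm_eq_abs,
        Real.norm_eq_abs]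
      have e1 : |2 * ‖B.T x‖⁻¹| * ‖B.m x‖ ≤ 2 * R / ‖B.T x‖ := by
        rw [abs_of_nonneg (by positivity), div_eq_mul_inv]
        nlinarith [inv_nonneg.mpr hy0.le]
      have e2 : |‖x‖⁻¹ - ‖B.T x‖⁻¹| * ‖x‖ ≤ 2 * R / ‖B.T x‖ := by
        have h3 : ‖x‖⁻¹ - ‖B.T x‖⁻¹ = (‖B.T x‖ - ‖x‖) / (‖x‖ * ‖B.T x‖) := by
          field_simp
        have h5 : |‖x‖⁻¹ - ‖B.T x‖⁻¹| * ‖x‖ = |‖B.T x‖ - ‖x‖| / ‖B.T x‖ := by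
          rw [h3, abs_div, abs_of_nonneg (by positivity : (0:ℝ) ≤ ‖x‖ * ‖B.T x‖),
            div_mul_eq_mul_div, mul_comm ‖x‖ ‖B.T x‖, mul_div_mul_right _ _ hx0.ne']
        rw [h5, div_le_div_iff₀ hy0 hy0]
        exact mul_le_mul_of_nonneg_right hyx hy0.le
      have e3 : 2 * R / ‖B.T x‖ + 2 * R / ‖B.T x‖ ≤ 8 * R / ‖x‖ := by
        rw [← add_div, div_le_div_iff₀ hy0 hx0]
        nlinarith [mul_le_mul_of_nonneg_left hy_half (by positivity : (0:ℝ) ≤ 8 * R)]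
      linarith
    have hlip := B.aux_lip hw1 hv1
    have hnm : B.nminus (B.T x) = B.Ginv w := rfl
    have hnp : B.nplus x = B.Ginv v := rfl
    calc ‖B.nminus (B.T x) - B.nplus x‖ = ‖B.Ginv w - B.Ginv v‖ := by rw [hnm, hnp]
      _ ≤ (B.KGinv : ℝ) * ‖w - v‖ := hlip
      _ ≤ K * (8 * R / ‖x‖) :=
          mul_le_mul hKG hbound (norm_nonneg _) (by linarith)
      _ ≤ 8 * R * K / ‖x‖ := by
          rw [show K * (8 * R / ‖x‖) = 8 * R * K / ‖x‖ from by ring]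
end
end

section
/- In the outer symplectic billiard setting, with constants C, δ > 0 as furnished by the three basic estimates (|n_-(x) − m_-(x)| ≤ C/|x|, |m_-(T(x)) − n_-(T(x))| ≤ C/|x|, |n_-(T(x)) − n_+(x)| ≤ C/|x| for |x| ≥ 1/δ), one has for every x with f(x) > 1 and |x| ≥ 1/δ: |T(T(x)) − x − V(x)| ≤ 6C/|x|, where V(x) = 2(n_+(x) − n_-(x)). -/
open scoped RealInnerProductSpace NNReal

noncomputable section

/-- In the outer symplectic billiard setting, with constants `C, δ > 0`
as furnished by the three basic estimates (`‖n₋ x − m x‖ ≤ C/‖x‖`,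
`‖m (T x) − n₋ (T x)‖ ≤ C/‖x‖`, `‖n₋ (T x) − n₊ x‖ ≤ C/‖x‖` for `‖x‖ ≥ 1/δ`), one has,
for every `x` with `f x > 1` and `‖x‖ ≥ 1/δ`:
`‖T (T x) − x − V x‖ ≤ 6C/‖x‖`, where `V x = 2 (n₊ x − n₋ x)`. -/
theorem stmt10 {d : ℕ} (B : OuterBilliardSetting d)
    (C δ : ℝ) (hC : 0 < C) (hδ : 0 < δ)
    (h1 : ∀ x : EuclideanSpace ℝ (Fin (2 * d)), 1 < B.f x → 1 / δ ≤ ‖x‖ →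
      ‖B.nminus x - B.m x‖ ≤ C / ‖x‖)
    (h2 : ∀ x : EuclideanSpace ℝ (Fin (2 * d)), 1 < B.f x → 1 / δ ≤ ‖x‖ →
      ‖B.m (B.T x) - B.nminus (B.T x)‖ ≤ C / ‖x‖)
    (h3 : ∀ x : EuclideanSpace ℝ (Fin (2 * d)), 1 < B.f x → 1 / δ ≤ ‖x‖ →
      ‖B.nminus (B.T x) - B.nplus x‖ ≤ C / ‖x‖) :
    ∀ x : EuclideanSpace ℝ (Fin (2 * d)), 1 < B.f x → 1 / δ ≤ ‖x‖ →
      ‖B.T (B.T x) - x - B.V x‖ ≤ 6 * C / ‖x‖ := by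
  intro x hx hnx
  have e1 := h1 x hx hnx
  have e2 := h2 x hx hnx
  have e3 := h3 x hx hnx
  have key : B.T (B.T x) - x - B.V x =
      (2:ℝ) • ((B.m (B.T x) - B.nminus (B.T x)) + (B.nminus (B.T x) - B.nplus x)
        + (B.nminus x - B.m x)) := by
    simp only [OuterBilliardSetting.T, OuterBilliardSetting.V]
    module
  rw [key]
  have hb : ‖(B.m (B.T x) - B.nminus (B.T x)) + (B.nminus (B.T x) - B.nplus x)
      + (B.nminus x - B.m x)‖ ≤ 3 * (C / ‖x‖) := by
    calc _ ≤ ‖(B.m (B.T x) - B.nminus (B.T x)) + (B.nminus (B.T x) - B.nplus x)‖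
          + ‖B.nminus x - B.m x‖ := norm_add_le _ _
      _ ≤ ‖B.m (B.T x) - B.nminus (B.T x)‖ + ‖B.nminus (B.T x) - B.nplus x‖
          + ‖B.nminus x - B.m x‖ := by linarith [norm_add_le (B.m (B.T x) - B.nminus (B.T x)) (B.nminus (B.T x) - B.nplus x)]
      _ ≤ 3 * (C / ‖x‖) := by linarith
  calc ‖(2:ℝ) • ((B.m (B.T x) - B.nminus (B.T x)) + (B.nminus (B.T x) - B.nplus x)
        + (B.nminus x - B.m x))‖
      = 2 * ‖(B.m (B.T x) - B.nminus (B.T x)) + (B.nminus (B.T x) - B.nplus x)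
        + (B.nminus x - B.m x)‖ := by rw [norm_smul]; norm_num
    _ ≤ 2 * (3 * (C / ‖x‖)) := by linarith
    _ = 6 * C / ‖x‖ := by ring
end
end

section
/- In the outer symplectic billiard setting, let V(x) := 2(n_+(x) − n_-(x)) and let φ be a flow of V (φ(0,x) = x, ∂_t φ(t,x) = V(φ(t,x)), with trajectories staying in ℝ^{2d}\{0} and φ(s,x) defined for s ∈ [0,1] and |x| large), and set F := φ(1, ·). Then there exist constants c > 0 and Δ > 0, depending only on M, such that for every x with |x| ≥ 1/Δ one has |T(T(x)) − F(x)| ≤ c/|x|. (Explicitly one can take c = 6C + C̃, where C is the constant of the basic geometric estimates and C̃ the constant of the Taylor estimate |φ(1,x) − x − V(x)| ≤ C̃/|x|.) -/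
open scoped RealInnerProductSpace NNReal

noncomputable section

lemma hat_sub_norm_le {E : Type*} [NormedAddCommGroup E] [NormedSpace ℝ E]
    (a w : E) (ha : a ≠ 0) (hw : w ≠ 0) :
    ‖‖a‖⁻¹ • a - ‖w‖⁻¹ • w‖ ≤ 2 * ‖a - w‖ / ‖a‖ := by
  have ha' : (0:ℝ) < ‖a‖ := norm_pos_iff.mpr ha
  have hw' : (0:ℝ) < ‖w‖ := norm_pos_iff.mpr hw
  have heq : ‖a‖⁻¹ • a - ‖w‖⁻¹ • w = ‖a‖⁻¹ • (a - w) + (‖a‖⁻¹ - ‖w‖⁻¹) • w := by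
    module
  rw [heq]
  have h2 : ‖(‖a‖⁻¹ - ‖w‖⁻¹) • w‖ ≤ ‖a - w‖ / ‖a‖ := by
    rw [norm_smul, Real.norm_eq_abs, le_div_iff₀ ha']
    have e1 : |‖a‖⁻¹ - ‖w‖⁻¹| * ‖w‖ * ‖a‖ = |(‖a‖⁻¹ - ‖w‖⁻¹) * ‖w‖ * ‖a‖| := by
      rw [abs_mul, abs_mul, abs_of_pos hw', abs_of_pos ha']
    have e2 : (‖a‖⁻¹ - ‖w‖⁻¹) * ‖w‖ * ‖a‖ = ‖w‖ - ‖a‖ := by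
      field_simp
    rw [e1, e2]
    calc |‖w‖ - ‖a‖| ≤ ‖w - a‖ := abs_norm_sub_norm_le w a
      _ = ‖a - w‖ := norm_sub_rev w a
  calc ‖‖a‖⁻¹ • (a - w) + (‖a‖⁻¹ - ‖w‖⁻¹) • w‖
      ≤ ‖‖a‖⁻¹ • (a - w)‖ + ‖(‖a‖⁻¹ - ‖w‖⁻¹) • w‖ := norm_add_le _ _
    _ ≤ ‖a‖⁻¹ * ‖a - w‖ + ‖a - w‖ / ‖a‖ := by
        rw [norm_smul, Real.norm_eq_abs, abs_of_pos (inv_pos.mpr ha')]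
        exact add_le_add (le_refl _) h2
    _ = 2 * ‖a - w‖ / ‖a‖ := by field_simp; ring


set_option maxHeartbeats 1000000 in
/-- In the outer symplectic billiard setting, let
`V x := 2 (n₊ x − n₋ x)` (a smooth, positively 0-homogeneous vector field) and let `φ` be
a flow of `V` (`φ 0 x = x`, `∂ₜ φ(t,x) = V (φ(t,x))`, with trajectories staying in
`ℝ^{2d}\{0}` and `φ s x` defined for `s ∈ [0,1]` and `‖x‖` large), and set `F := φ 1`.
Then there exist constants `c > 0` and `Δ > 0`, depending only on `M`, such that for
every `x` with `‖x‖ ≥ 1/Δ` one has `‖T (T x) − F x‖ ≤ c/‖x‖`. -/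
theorem stmt11 {d : ℕ} (B : OuterBilliardSetting d)
    (hV_smooth : ContDiffOn ℝ (⊤ : ℕ∞) B.V {(0 : EuclideanSpace ℝ (Fin (2 * d)))}ᶜ)
    (φ : ℝ → EuclideanSpace ℝ (Fin (2 * d)) → EuclideanSpace ℝ (Fin (2 * d)))
    (ρ : ℝ) (hρ : 0 < ρ)
    (hφ0 : ∀ x : EuclideanSpace ℝ (Fin (2 * d)), ρ ≤ ‖x‖ → φ 0 x = x)
    (hφd : ∀ x : EuclideanSpace ℝ (Fin (2 * d)), ρ ≤ ‖x‖ → ∀ s ∈ Set.Icc (0 : ℝ) 1,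
      HasDerivAt (fun t => φ t x) (B.V (φ s x)) s)
    (hφne : ∀ x : EuclideanSpace ℝ (Fin (2 * d)), ρ ≤ ‖x‖ → ∀ s ∈ Set.Icc (0 : ℝ) 1,
      φ s x ≠ 0) :
    ∃ c : ℝ, 0 < c ∧ ∃ Δ : ℝ, 0 < Δ ∧
      ∀ x : EuclideanSpace ℝ (Fin (2 * d)), 1 / Δ ≤ ‖x‖ →
        ‖B.T (B.T x) - φ 1 x‖ ≤ c / ‖x‖ := by
  classical
  obtain ⟨R₀, hR₀⟩ := B.hbody_compact.isBounded.subset_closedBall 0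
  set R : ℝ := max R₀ 1 with hRdef
  have hR1 : (1:ℝ) ≤ R := le_max_right _ _
  have hR0 : (0:ℝ) < R := lt_of_lt_of_le one_pos hR1
  have hMR : ∀ q, B.f q ≤ 1 → ‖q‖ ≤ R := by
    intro q hq
    have hq' := hR₀ hq
    rw [Metric.mem_closedBall, dist_zero_right] at hq'
    exact hq'.trans (le_max_left _ _)
  have hfgt : ∀ y, R < ‖y‖ → 1 < B.f y := by
    intro y hy
    by_contra h
    push_neg at h
    exact absurd (hMR y h) (not_le.mpr hy)
  set K : ℝ := (B.KGinv : ℝ) with hKdef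
  have hK0 : (0:ℝ) ≤ K := B.KGinv.coe_nonneg
  have hunit : ∀ z : EuclideanSpace ℝ (Fin (2 * d)), z ≠ 0 →
      ‖‖z‖⁻¹ • B.J z‖ = 1 := by
    intro z hz
    have hz' : (0:ℝ) < ‖z‖ := norm_pos_iff.mpr hz
    rw [norm_smul, B.J.norm_map, Real.norm_eq_abs, abs_of_pos (inv_pos.mpr hz')]
    field_simp
  have hGd : ∀ u v : EuclideanSpace ℝ (Fin (2 * d)), ‖u‖ = 1 → ‖v‖ = 1 →
      ‖B.Ginv u - B.Ginv v‖ ≤ K * ‖u - v‖ := by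
    intro u v hu hv
    have h := B.hGinv_lip.dist_le_mul u (mem_sphere_zero_iff_norm.mpr hu)
      v (mem_sphere_zero_iff_norm.mpr hv)
    simpa [dist_eq_norm] using h
  have hGR : ∀ u : EuclideanSpace ℝ (Fin (2 * d)), ‖u‖ = 1 → ‖B.Ginv u‖ ≤ R := by
    intro u hu
    exact hMR _ (le_of_eq (B.hGinv_mem u hu))
  have hVb : ∀ z : EuclideanSpace ℝ (Fin (2 * d)), z ≠ 0 → ‖B.V z‖ ≤ 4 * R := by
    intro z hz
    have h1 : ‖B.nplus z‖ ≤ R := hGR _ (by rw [norm_neg]; exact hunit z hz)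
    have h2 : ‖B.nminus z‖ ≤ R := hGR _ (hunit z hz)
    calc ‖B.V z‖ = ‖(2:ℝ) • (B.nplus z - B.nminus z)‖ := rfl
      _ ≤ 2 * (‖B.nplus z‖ + ‖B.nminus z‖) := by
          rw [norm_smul]
          simp only [Real.norm_ofNat]
          have h3 := norm_sub_le (B.nplus z) (B.nminus z)
          nlinarith
      _ ≤ 4 * R := by nlinarith
  have hVlip : ∀ z w : EuclideanSpace ℝ (Fin (2 * d)), z ≠ 0 → w ≠ 0 →
      ‖B.V z - B.V w‖ ≤ 8 * K * ‖z - w‖ / ‖w‖ := by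
    intro z w hz hw
    have hhat : ‖(‖z‖⁻¹ • z) - (‖w‖⁻¹ • w)‖ ≤ 2 * ‖z - w‖ / ‖w‖ := by
      have h := hat_sub_norm_le w z hw hz
      rw [norm_sub_rev, norm_sub_rev w z] at h
      exact h
    have hJz : ‖z‖⁻¹ • B.J z = B.J (‖z‖⁻¹ • z) := (map_smul B.J _ z).symm
    have hJw : ‖w‖⁻¹ • B.J w = B.J (‖w‖⁻¹ • w) := (map_smul B.J _ w).symm
    have hp : ‖B.nplus z - B.nplus w‖ ≤ K * ‖(‖z‖⁻¹ • z) - (‖w‖⁻¹ • w)‖ := by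
      have h := hGd (-(‖z‖⁻¹ • B.J z)) (-(‖w‖⁻¹ • B.J w))
        (by rw [norm_neg]; exact hunit z hz) (by rw [norm_neg]; exact hunit w hw)
      refine h.trans (le_of_eq ?_)
      congr 1
      rw [hJz, hJw,
        show -B.J (‖z‖⁻¹ • z) - -B.J (‖w‖⁻¹ • w)
          = -(B.J (‖z‖⁻¹ • z) - B.J (‖w‖⁻¹ • w)) by abel,
        norm_neg, ← map_sub, B.J.norm_map]
    have hq : ‖B.nminus z - B.nminus w‖ ≤ K * ‖(‖z‖⁻¹ • z) - (‖w‖⁻¹ • w)‖ := by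
      have h := hGd (‖z‖⁻¹ • B.J z) (‖w‖⁻¹ • B.J w) (hunit z hz) (hunit w hw)
      refine h.trans (le_of_eq ?_)
      congr 1
      rw [hJz, hJw, ← map_sub, B.J.norm_map]
    have hVeq : B.V z - B.V w
        = (2:ℝ) • ((B.nplus z - B.nplus w) - (B.nminus z - B.nminus w)) := by
      show (2:ℝ) • (B.nplus z - B.nminus z) - (2:ℝ) • (B.nplus w - B.nminus w) = _
      module
    calc ‖B.V z - B.V w‖
        = ‖(2:ℝ) • ((B.nplus z - B.nplus w) - (B.nminus z - B.nminus w))‖ := by rw [hVeq]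
      _ ≤ 2 * (‖B.nplus z - B.nplus w‖ + ‖B.nminus z - B.nminus w‖) := by
          rw [norm_smul]
          simp only [Real.norm_ofNat]
          have h3 := norm_sub_le (B.nplus z - B.nplus w) (B.nminus z - B.nminus w)
          nlinarith
      _ ≤ 4 * K * ‖(‖z‖⁻¹ • z) - (‖w‖⁻¹ • w)‖ := by nlinarith
      _ ≤ 8 * K * ‖z - w‖ / ‖w‖ := by
          have h := mul_le_mul_of_nonneg_left hhat (by nlinarith : (0:ℝ) ≤ 4 * K)
          calc 4 * K * ‖(‖z‖⁻¹ • z) - (‖w‖⁻¹ • w)‖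
              ≤ 4 * K * (2 * ‖z - w‖ / ‖w‖) := h
            _ = 8 * K * ‖z - w‖ / ‖w‖ := by ring
  have hz_ne : ∀ z : EuclideanSpace ℝ (Fin (2 * d)), 1 < B.f z → z ≠ 0 := by
    intro z hz h0
    have h1 : B.f (0 : EuclideanSpace ℝ (Fin (2 * d))) ≤ 1 := by
      have h2 := interior_subset B.hbody_zero
      simpa using h2
    rw [h0] at hz; linarith
  have hmE : ∀ z : EuclideanSpace ℝ (Fin (2 * d)), 1 < B.f z →
      ‖B.m z - B.nminus z‖ ≤ 2 * K * R / ‖z‖ := by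
    intro z hz
    have hz0 : z ≠ 0 := hz_ne z hz
    have hz' : (0:ℝ) < ‖z‖ := norm_pos_iff.mpr hz0
    obtain ⟨t, ht, hmr⟩ := B.hm_ray z hz
    set g := gradient B.f (B.m z) with hgdef
    have hfm : B.f (B.m z) = 1 := B.hm_mem z hz
    have hg0 : g ≠ 0 := B.hgrad_ne _ hfm
    have hg' : (0:ℝ) < ‖g‖ := norm_pos_iff.mpr hg0
    set u := B.J g with hudef
    have hug : ‖u‖ = ‖g‖ := B.J.norm_map g
    have hu' : (0:ℝ) < ‖u‖ := by rw [hug]; exact hg'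
    have hu0 : u ≠ 0 := norm_pos_iff.mp hu'
    set w := z - B.m z with hwdef
    have hwu : w = (-t) • u := by
      rw [hwdef, neg_smul, ← hmr]; abel
    have hw0 : w ≠ 0 := by
      rw [hwu]
      exact smul_ne_zero (neg_ne_zero.mpr (ne_of_gt ht)) hu0
    have hwnorm : ‖w‖ = t * ‖u‖ := by
      rw [hwu, norm_smul, Real.norm_eq_abs, abs_neg, abs_of_pos ht]
    have hhatw : ‖w‖⁻¹ • w = -(‖u‖⁻¹ • u) := by
      rw [hwnorm, hwu, smul_smul, ← neg_smul]
      congr 1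
      have ht0 : t ≠ 0 := ne_of_gt ht
      have hu0' : ‖u‖ ≠ 0 := ne_of_gt hu'
      field_simp
    have hA : ‖(‖z‖⁻¹ • z) + (‖u‖⁻¹ • u)‖ ≤ 2 * R / ‖z‖ := by
      have h1 := hat_sub_norm_le z w hz0 hw0
      rw [hhatw, sub_neg_eq_add] at h1
      have h2 : z - w = B.m z := by rw [hwdef]; abel
      rw [h2] at h1
      have h3 : ‖B.m z‖ ≤ R := hMR _ (le_of_eq hfm)
      refine h1.trans ?_
      gcongr
    have hB : ‖(‖z‖⁻¹ • B.J z) - (‖g‖⁻¹ • g)‖ ≤ 2 * R / ‖z‖ := by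
      have e : B.J ((‖z‖⁻¹ • z) + (‖u‖⁻¹ • u)) = (‖z‖⁻¹ • B.J z) - (‖g‖⁻¹ • g) := by
        rw [map_add, map_smul, map_smul, hug]
        have hJu : B.J u = -g := by rw [hudef, B.hJ]
        rw [hJu, smul_neg]
        abel
      rw [← e, B.J.norm_map]
      exact hA
    have hmz : B.m z = B.Ginv (‖g‖⁻¹ • g) := (B.hGinv_left _ hfm).symm
    have hgu : ‖(‖g‖⁻¹ • g : EuclideanSpace ℝ (Fin (2 * d)))‖ = 1 :=
      norm_smul_inv_norm hg0
    have hnz : B.nminus z = B.Ginv (‖z‖⁻¹ • B.J z) := rfl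
    rw [hmz, hnz]
    refine (hGd _ _ hgu (hunit z hz0)).trans ?_
    rw [norm_sub_rev]
    calc K * ‖(‖z‖⁻¹ • B.J z) - (‖g‖⁻¹ • g)‖ ≤ K * (2 * R / ‖z‖) :=
        mul_le_mul_of_nonneg_left hB hK0
      _ = 2 * K * R / ‖z‖ := by ring
  -- main part
  refine ⟨60 * K * R + 1, by nlinarith, (8 * R + ρ)⁻¹, by positivity, ?_⟩
  intro x hx
  have hΘ : 8 * R + ρ ≤ ‖x‖ := by
    rw [one_div, inv_inv] at hx
    exact hx
  have hx8 : 8 * R ≤ ‖x‖ := by linarith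
  have hxρ : ρ ≤ ‖x‖ := by linarith
  have hx' : (0:ℝ) < ‖x‖ := by linarith
  have hx0 : x ≠ 0 := norm_pos_iff.mp hx'
  have hfx1 : 1 < B.f x := hfgt x (by linarith)
  have hmx : ‖B.m x‖ ≤ R := hMR _ (le_of_eq (B.hm_mem x hfx1))
  set y := B.T x with hy
  have hyx : y + x = (2:ℝ) • B.m x := by
    rw [hy]
    show (2:ℝ) • B.m x - x + x = _
    abel
  have hyxn : ‖y + x‖ ≤ 2 * R := by
    rw [hyx, norm_smul]
    simp only [Real.norm_ofNat]
    linarith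
  have hylb : ‖x‖ / 2 ≤ ‖y‖ := by
    have h1 : ‖x‖ ≤ ‖y + x‖ + ‖y‖ := by
      calc ‖x‖ = ‖(y + x) - y‖ := by congr 1; abel
        _ ≤ ‖y + x‖ + ‖y‖ := norm_sub_le _ _
    linarith
  have hy' : (0:ℝ) < ‖y‖ := by linarith
  have hy0 : y ≠ 0 := norm_pos_iff.mp hy'
  have hfy1 : 1 < B.f y := hfgt y (by linarith)
  have E1 := hmE x hfx1
  have E2 : ‖B.m y - B.nminus y‖ ≤ 4 * K * R / ‖x‖ := by
    refine (hmE y hfy1).trans ?_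
    rw [div_le_div_iff₀ hy' hx']
    nlinarith [mul_nonneg hK0 hR0.le]
  have E3 : ‖B.nminus y - B.nplus x‖ ≤ 8 * K * R / ‖x‖ := by
    have hnegx : (-x : EuclideanSpace ℝ (Fin (2 * d))) ≠ 0 := neg_ne_zero.mpr hx0
    have hhat : ‖(‖y‖⁻¹ • y) - (‖(-x : EuclideanSpace ℝ (Fin (2 * d)))‖⁻¹ • (-x))‖
        ≤ 4 * R / ‖y‖ := by
      refine (hat_sub_norm_le y (-x) hy0 hnegx).trans ?_
      rw [show y - -x = y + x by abel]
      calc 2 * ‖y + x‖ / ‖y‖ ≤ 2 * (2 * R) / ‖y‖ := by gcongr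
        _ = 4 * R / ‖y‖ := by ring
    have harg : ‖(‖y‖⁻¹ • B.J y) - (-(‖x‖⁻¹ • B.J x))‖ ≤ 4 * R / ‖y‖ := by
      have e : B.J ((‖y‖⁻¹ • y) - (‖(-x : EuclideanSpace ℝ (Fin (2 * d)))‖⁻¹ • (-x)))
          = (‖y‖⁻¹ • B.J y) - (-(‖x‖⁻¹ • B.J x)) := by
        rw [map_sub, map_smul, map_smul, map_neg, norm_neg, smul_neg]
      rw [← e, B.J.norm_map]
      exact hhat
    have h := hGd (‖y‖⁻¹ • B.J y) (-(‖x‖⁻¹ • B.J x)) (hunit y hy0)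
      (by rw [norm_neg]; exact hunit x hx0)
    have hn1 : B.nminus y = B.Ginv (‖y‖⁻¹ • B.J y) := rfl
    have hn2 : B.nplus x = B.Ginv (-(‖x‖⁻¹ • B.J x)) := rfl
    rw [hn1, hn2]
    refine h.trans ?_
    calc K * ‖(‖y‖⁻¹ • B.J y) - (-(‖x‖⁻¹ • B.J x))‖ ≤ K * (4 * R / ‖y‖) :=
        mul_le_mul_of_nonneg_left harg hK0
      _ = 4 * K * R / ‖y‖ := by ring
      _ ≤ 8 * K * R / ‖x‖ := by
          rw [div_le_div_iff₀ hy' hx']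
          nlinarith [mul_nonneg hK0 hR0.le]
  have Emy : ‖B.m y - B.nplus x‖ ≤ 12 * K * R / ‖x‖ := by
    have tri : B.m y - B.nplus x = (B.m y - B.nminus y) + (B.nminus y - B.nplus x) := by
      abel
    rw [tri]
    refine (norm_add_le _ _).trans ?_
    have e : 4 * K * R / ‖x‖ + 8 * K * R / ‖x‖ = 12 * K * R / ‖x‖ := by ring
    linarith
  have hTeq : B.T y - x - B.V x
      = (2:ℝ) • (B.m y - B.nplus x) - (2:ℝ) • (B.m x - B.nminus x) := by
    have h1 : B.T y = (2:ℝ) • B.m y - y := rfl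
    have h2 : y = (2:ℝ) • B.m x - x := by rw [hy]; rfl
    have h3 : B.V x = (2:ℝ) • (B.nplus x - B.nminus x) := rfl
    rw [h1, h3]
    nth_rewrite 2 [h2]
    module
  have hT2 : ‖B.T y - x - B.V x‖ ≤ 28 * K * R / ‖x‖ := by
    rw [hTeq]
    refine (norm_sub_le _ _).trans ?_
    rw [norm_smul, norm_smul]
    simp only [Real.norm_ofNat]
    have e : 2 * (12 * K * R / ‖x‖) + 2 * (2 * K * R / ‖x‖) = 28 * K * R / ‖x‖ := by ring
    linarith
  -- flow estimate
  have hψd : ∀ s ∈ Set.Icc (0:ℝ) 1,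
      HasDerivWithinAt (fun t => φ t x) (B.V (φ s x)) (Set.Icc (0:ℝ) 1) s :=
    fun s hs => (hφd x hxρ s hs).hasDerivWithinAt
  have hψne : ∀ s ∈ Set.Icc (0:ℝ) 1, φ s x ≠ 0 := fun s hs => hφne x hxρ s hs
  have hnear : ∀ s ∈ Set.Icc (0:ℝ) 1, ‖φ s x - x‖ ≤ 4 * R * s := by
    intro s hs
    have h := norm_image_sub_le_of_norm_deriv_le_segment' hψd
      (fun t ht => hVb (φ t x) (hψne t (Set.Ico_subset_Icc_self ht))) s hs
    rw [hφ0 x hxρ] at h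
    simpa using h
  have hgd : ∀ s ∈ Set.Icc (0:ℝ) 1,
      HasDerivWithinAt (fun t => φ t x - t • B.V x) (B.V (φ s x) - B.V x)
        (Set.Icc (0:ℝ) 1) s := by
    intro s hs
    have h := ((hasDerivAt_id s).smul_const (B.V x)).hasDerivWithinAt
      (s := Set.Icc (0:ℝ) 1)
    rw [one_smul] at h
    exact (hψd s hs).sub h
  have hgb : ∀ s ∈ Set.Ico (0:ℝ) 1, ‖B.V (φ s x) - B.V x‖ ≤ 32 * K * R / ‖x‖ := by
    intro s hs
    have hs' : s ∈ Set.Icc (0:ℝ) 1 := Set.Ico_subset_Icc_self hs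
    refine (hVlip (φ s x) x (hψne s hs') hx0).trans ?_
    have h2 : ‖φ s x - x‖ ≤ 4 * R := by
      have h3 := hnear s hs'
      nlinarith [hs'.1, hs'.2, hR0]
    rw [div_le_div_iff₀ hx' hx']
    have key : (0:ℝ) ≤ 8 * K * ‖x‖ * (4 * R - ‖φ s x - x‖) :=
      mul_nonneg (by positivity) (sub_nonneg.mpr h2)
    nlinarith
  have hflow : ‖φ 1 x - x - B.V x‖ ≤ 32 * K * R / ‖x‖ := by
    have h := norm_image_sub_le_of_norm_deriv_le_segment' hgd hgb 1
      (by constructor <;> norm_num : (1:ℝ) ∈ Set.Icc (0:ℝ) 1)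
    simp only [one_smul, zero_smul, sub_zero] at h
    rw [hφ0 x hxρ] at h
    have e : φ 1 x - B.V x - x = φ 1 x - x - B.V x := by abel
    rw [e] at h
    simpa using h
  have final : ‖B.T y - φ 1 x‖ ≤ 60 * K * R / ‖x‖ := by
    have e : B.T y - φ 1 x = (B.T y - x - B.V x) - (φ 1 x - x - B.V x) := by abel
    rw [e]
    refine (norm_sub_le _ _).trans ?_
    have e2 : 28 * K * R / ‖x‖ + 32 * K * R / ‖x‖ = 60 * K * R / ‖x‖ := by ring
    linarith
  refine final.trans ?_
  rw [div_le_div_iff₀ hx' hx']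
  nlinarith [mul_nonneg hK0 hR0.le]
end
end

section
/- Let E = ℝ^n with Euclidean norm |·|, let H be a norm on E with (1/μ)|x| ≤ H(x) ≤ μ|x| for some μ ≥ 1, and let c, Δ > 0. Let S, F: E → E be maps such that H(F(x)) = H(x) for all x, and |S(x) − F(x)| ≤ c/|x| whenever |x| ≥ 1/Δ. Set C̄ := 2μ²c + 3μ²c²Δ². Then for every x and every integer k ≥ 1 such that H(S^j(x)) ≥ μ/Δ for all j = 0, 1, …, k−1, one has |H(S^k(x))² − H(x)²| ≤ C̄·k. (Applied with S = T², F the time-1 flow map of V, and H the gauge of the symplectic polar of the symmetrization of M, this shows orbits of the outer symplectic billiard map escape to infinity at rate at most of order √k.) -/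
/-!
Since `F` preserves `H`, one step of `S` changes `H` by at most `δ := H (S y - F y)`, so it changes
`H²` by at most `δ (2 H y + δ)`. The hypothesis `‖S y - F y‖ ≤ c / ‖y‖` makes `δ · H y ≤ μ² c`
and `δ ≤ μ c Δ`, a bound independent of `y`; summing these one-step bounds along the orbit gives
linear growth of `H²`.
-/

open Function

lemma abs_sq_sub_sq_le_of_abs_sub_le {a b d : ℝ} (hb : 0 ≤ b) (h : |a - b| ≤ d) :
    |a ^ 2 - b ^ 2| ≤ 2 * b * d + d ^ 2 := by
  have hsum : |a + b| ≤ 2 * b + d := by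
    calc |a + b| = |(a - b) + 2 * b| := by ring_nf
      _ ≤ |a - b| + |2 * b| := abs_add_le _ _
      _ ≤ d + 2 * b := by rw [abs_of_nonneg (by positivity : 0 ≤ 2 * b)]; linarith
      _ = 2 * b + d := by ring
  calc |a ^ 2 - b ^ 2| = |a + b| * |a - b| := by rw [sq_sub_sq, abs_mul]
    _ ≤ (2 * b + d) * d := mul_le_mul hsum h (abs_nonneg _) (by linarith [abs_nonneg (a + b)])
    _ = 2 * b * d + d ^ 2 := by ring

lemma abs_iterate_sub_le_mul {α : Type*} (f : α → α) (g : α → ℝ) (P : α → Prop) {C : ℝ}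
    (hstep : ∀ y, P y → |g (f y) - g y| ≤ C) (x : α) :
    ∀ k : ℕ, (∀ j < k, P (f^[j] x)) → |g (f^[k] x) - g x| ≤ C * k
  | 0, _ => by simp
  | k + 1, hP => by
    have ih := abs_iterate_sub_le_mul f g P hstep x k fun j hj => hP j (by omega)
    have hlast := hstep _ (hP k k.lt_succ_self)
    rw [iterate_succ_apply']
    calc |g (f (f^[k] x)) - g x|
        ≤ |g (f (f^[k] x)) - g (f^[k] x)| + |g (f^[k] x) - g x| := abs_sub_le _ _ _
      _ ≤ C * (k + 1 : ℕ) := by push_cast; linarith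

section Seminorm

variable {E : Type*} [SeminormedAddCommGroup E] [NormedSpace ℝ E] (p : Seminorm ℝ E) {μ : ℝ}

lemma Seminorm.one_div_le_norm_of_div_le (hμ : 0 < μ) (hup : ∀ x, p x ≤ μ * ‖x‖) {Δ : ℝ}
    {y : E} (hy : μ / Δ ≤ p y) : 1 / Δ ≤ ‖y‖ := by
  refine le_of_mul_le_mul_left ?_ hμ
  rw [mul_one_div]
  exact hy.trans (hup y)

lemma Seminorm.abs_sq_sub_sq_le_of_norm_sub_le (hμ : 0 < μ) (hup : ∀ x, p x ≤ μ * ‖x‖)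
    {c Δ : ℝ} (hc : 0 ≤ c) (hΔ : 0 < Δ) {y z w : E} (hw : p w = p y) (hy : 1 / Δ ≤ ‖y‖)
    (hzw : ‖z - w‖ ≤ c / ‖y‖) :
    |p z ^ 2 - p y ^ 2| ≤ 2 * μ ^ 2 * c + μ ^ 2 * c ^ 2 * Δ ^ 2 := by
  have hy0 : 0 < ‖y‖ := (one_div_pos.mpr hΔ).trans_le hy
  set δ := p (z - w)
  have hδ : δ ≤ μ * c / ‖y‖ :=
    (hup _).trans <| by rw [mul_div_assoc]; exact mul_le_mul_of_nonneg_left hzw hμ.le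
  have hδy : δ * p y ≤ μ ^ 2 * c :=
    calc δ * p y ≤ μ * c / ‖y‖ * (μ * ‖y‖) :=
          mul_le_mul hδ (hup y) (apply_nonneg _ _) (by positivity)
      _ = μ ^ 2 * c := by field_simp
  have hδΔ : δ ≤ μ * c * Δ :=
    hδ.trans <| by
      rw [div_eq_mul_one_div]
      exact mul_le_mul_of_nonneg_left ((one_div_le hy0 hΔ).mpr hy) (by positivity)
  have hstep : |p z - p y| ≤ δ := hw ▸ abs_sub_map_le_sub p z w
  calc |p z ^ 2 - p y ^ 2| ≤ 2 * p y * δ + δ ^ 2 :=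
        abs_sq_sub_sq_le_of_abs_sub_le (apply_nonneg _ _) hstep
    _ ≤ 2 * (μ ^ 2 * c) + (μ * c * Δ) ^ 2 := by
        have := pow_le_pow_left₀ (apply_nonneg p _) hδΔ 2
        linarith
    _ = 2 * μ ^ 2 * c + μ ^ 2 * c ^ 2 * Δ ^ 2 := by ring

end Seminorm

theorem stmt12_general {n : ℕ} (H : EuclideanSpace ℝ (Fin n) → ℝ)
    (Hadd : ∀ x y : EuclideanSpace ℝ (Fin n), H (x + y) ≤ H x + H y)
    (Hsmul : ∀ (c : ℝ) (x : EuclideanSpace ℝ (Fin n)), H (c • x) = |c| * H x)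
    (μ : ℝ) (hμ : 1 ≤ μ)
    (hup : ∀ x : EuclideanSpace ℝ (Fin n), H x ≤ μ * ‖x‖)
    (c Δ : ℝ) (hc : 0 < c) (hΔ : 0 < Δ)
    (S F : EuclideanSpace ℝ (Fin n) → EuclideanSpace ℝ (Fin n))
    (hF : ∀ x, H (F x) = H x)
    (hSF : ∀ x : EuclideanSpace ℝ (Fin n), 1 / Δ ≤ ‖x‖ → ‖S x - F x‖ ≤ c / ‖x‖) :
    ∀ (x : EuclideanSpace ℝ (Fin n)) (k : ℕ), 1 ≤ k →
      (∀ j < k, μ / Δ ≤ H (S^[j] x)) →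
      |H (S^[k] x) ^ 2 - H x ^ 2| ≤ (2 * μ ^ 2 * c + 3 * μ ^ 2 * c ^ 2 * Δ ^ 2) * k := by
  let p : Seminorm ℝ (EuclideanSpace ℝ (Fin n)) := .of H Hadd Hsmul
  have hμ0 : 0 < μ := one_pos.trans_le hμ
  have hstep : ∀ y, μ / Δ ≤ H y →
      |H (S y) ^ 2 - H y ^ 2| ≤ 2 * μ ^ 2 * c + 3 * μ ^ 2 * c ^ 2 * Δ ^ 2 := by
    intro y hy
    have hyΔ : 1 / Δ ≤ ‖y‖ := p.one_div_le_norm_of_div_le hμ0 hup hy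
    calc |H (S y) ^ 2 - H y ^ 2| ≤ 2 * μ ^ 2 * c + μ ^ 2 * c ^ 2 * Δ ^ 2 :=
          p.abs_sq_sub_sq_le_of_norm_sub_le hμ0 hup hc.le hΔ (hF y) hyΔ (hSF y hyΔ)
      _ ≤ 2 * μ ^ 2 * c + 3 * μ ^ 2 * c ^ 2 * Δ ^ 2 := by
          have : 0 ≤ μ ^ 2 * c ^ 2 * Δ ^ 2 := by positivity
          linarith
  intro x k _ hk
  exact abs_iterate_sub_le_mul S (fun y => H y ^ 2) _ hstep x k hk

/-- Let `E = ℝ^n` with the Euclidean norm `‖·‖`, let `H` be a norm on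
`E` with `(1/μ)‖x‖ ≤ H x ≤ μ‖x‖` for some `μ ≥ 1`, and let `c, Δ > 0`.  Let
`S, F : E → E` be maps with `H (F x) = H x` for all `x` and `‖S x − F x‖ ≤ c/‖x‖`
whenever `‖x‖ ≥ 1/Δ`.  Set `C̄ := 2μ²c + 3μ²c²Δ²`.  Then for every `x` and every `k ≥ 1`
such that `H (S^[j] x) ≥ μ/Δ` for all `j = 0, 1, …, k−1`, one has
`|H (S^[k] x)² − H x²| ≤ C̄ k`.  (Orbits escape at rate at most of order `√k`.) -/
theorem stmt12 {n : ℕ} (H : EuclideanSpace ℝ (Fin n) → ℝ)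
    (Hadd : ∀ x y : EuclideanSpace ℝ (Fin n), H (x + y) ≤ H x + H y)
    (Hsmul : ∀ (c : ℝ) (x : EuclideanSpace ℝ (Fin n)), H (c • x) = |c| * H x)
    (Hdef : ∀ x : EuclideanSpace ℝ (Fin n), H x = 0 → x = 0)
    (μ : ℝ) (hμ : 1 ≤ μ)
    (hlow : ∀ x : EuclideanSpace ℝ (Fin n), (1 / μ) * ‖x‖ ≤ H x)
    (hup : ∀ x : EuclideanSpace ℝ (Fin n), H x ≤ μ * ‖x‖)
    (c Δ : ℝ) (hc : 0 < c) (hΔ : 0 < Δ)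
    (S F : EuclideanSpace ℝ (Fin n) → EuclideanSpace ℝ (Fin n))
    (hF : ∀ x, H (F x) = H x)
    (hSF : ∀ x : EuclideanSpace ℝ (Fin n), 1 / Δ ≤ ‖x‖ → ‖S x - F x‖ ≤ c / ‖x‖) :
    ∀ (x : EuclideanSpace ℝ (Fin n)) (k : ℕ), 1 ≤ k →
      (∀ j < k, μ / Δ ≤ H (S^[j] x)) →
      |H (S^[k] x) ^ 2 - H x ^ 2| ≤ (2 * μ ^ 2 * c + 3 * μ ^ 2 * c ^ 2 * Δ ^ 2) * k :=
  stmt12_general H Hadd Hsmul μ hμ hup c Δ hc hΔ S F hF hSF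
end

section
/- Let V: ℝ^n\{0} → ℝ^n be continuous, positively homogeneous of degree zero, and nonvanishing; set m := min_{|u|=1} |V(u)| > 0, and let 0 < η < 1/2 be such that for all x, y with 1/2 ≤ |x| ≤ 3/2, 1/2 ≤ |y| ≤ 3/2 and |x − y| < η, one has |V(x) − V(y)| < m/2. Let S: ℝ^n → ℝ^n be a map and C₁, C, δ > 0 constants such that |S(x) − x| ≤ 2C₁ for all x, and |S(x) − x − V(x)| ≤ 6C/|x| whenever |x| ≥ 1/δ. If z is a k-periodic point of S for some integer k ≥ 1 (S^k(z) = z), then |z| ≤ max{ 1/δ + 2(k−1)C₁, 2(k−1)C₁/η, 24C/m }. In particular, for each k, there are no k-periodic orbits outside the ball of this radius. -/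
/-!
Suppose `R = ‖z‖` exceeds the bound. Each step moves a point by at most `2C₁`, so the whole
orbit `x_j = S^[j] z`, `j < k`, lies within `2(k-1)C₁ < ηR` of `z`; in particular it stays in
the shell `R/2 ≤ ‖·‖ ≤ 3R/2` and outside the ball of radius `1/δ`. Rescaling by `R` and using
homogeneity, `‖V x_j - V z‖ < m/2`, and the error term is at most `12C/R`, so every step
`S x_j - x_j` lies within `m/2 + 12C/R` of `V z`. The steps of a periodic orbit sum to zero,
so `V z` itself is that close to `0`, while `‖V z‖ ≥ m`: hence `R < 24C/m`.
-/

open Finset Function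

theorem dist_iterate_le_of_lt {α : Type*} [PseudoMetricSpace α] {f : α → α} {D : ℝ}
    (hf : ∀ x, dist (f x) x ≤ D) (x : α) {j k : ℕ} (hjk : j < k) :
    dist (f^[j] x) x ≤ ((k : ℝ) - 1) * D := by
  have hD : 0 ≤ D := dist_nonneg.trans (hf x)
  have hj : (j : ℝ) ≤ k - 1 := by
    rw [le_sub_iff_add_le]; exact_mod_cast hjk
  rw [dist_comm]
  calc dist x (f^[j] x) ≤ ∑ _i ∈ range j, D :=
        dist_le_range_sum_of_dist_le (f := fun i ↦ f^[i] x) j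
          fun {i} _ ↦ by rw [dist_comm, iterate_succ_apply']; exact hf _
    _ = j * D := by rw [sum_const, card_range, nsmul_eq_mul]
    _ ≤ (k - 1) * D := by gcongr

theorem Function.IsPeriodicPt.sum_range_sub_eq_zero {G : Type*} [AddCommGroup G] {S : G → G}
    {k : ℕ} {z : G} (hz : IsPeriodicPt S k z) :
    ∑ j ∈ range k, (S (S^[j] z) - S^[j] z) = 0 := by
  simp_rw [← iterate_succ_apply' S]
  rw [sum_range_sub (S^[·] z), hz.eq, iterate_zero_apply, sub_self]

theorem norm_lt_of_forall_norm_sub_lt_of_sum_eq_zero {E : Type*} [SeminormedAddCommGroup E]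
    [NormedSpace ℝ E] {k : ℕ} (hk : 0 < k) {w : ℕ → E} (hw : ∑ j ∈ range k, w j = 0)
    {v : E} {ε : ℝ} (hclose : ∀ j < k, ‖w j - v‖ < ε) : ‖v‖ < ε := by
  have hkv : (k : ℝ) • v = ∑ j ∈ range k, (v - w j) := by
    rw [sum_sub_distrib, hw, sum_const, card_range, sub_zero, Nat.cast_smul_eq_nsmul]
  have hk' : (0 : ℝ) < k := by exact_mod_cast hk
  refine lt_of_mul_lt_mul_left ?_ hk'.le
  calc (k : ℝ) * ‖v‖ = ‖∑ j ∈ range k, (v - w j)‖ := by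
        rw [← hkv, norm_smul, Real.norm_natCast]
    _ ≤ ∑ j ∈ range k, ‖v - w j‖ := norm_sum_le _ _
    _ < ∑ _j ∈ range k, ε := sum_lt_sum_of_nonempty (nonempty_range_iff.2 hk.ne')
        fun j hj ↦ norm_sub_rev v (w j) ▸ hclose j (mem_range.1 hj)
    _ = k * ε := by rw [sum_const, card_range, nsmul_eq_mul]

section Homogeneous

variable {E F : Type*} [NormedAddCommGroup E] [NormedSpace ℝ E] [NormedAddCommGroup F]
  {V : E → F} (hhom : ∀ c : ℝ, 0 < c → ∀ x : E, x ≠ 0 → V (c • x) = V x)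
include hhom

theorem le_norm_of_homogeneous {m : ℝ} (hmV : ∀ u : E, ‖u‖ = 1 → m ≤ ‖V u‖) {x : E}
    (hx : x ≠ 0) : m ≤ ‖V x‖ := by
  have hx' : 0 < ‖x‖ := norm_pos_iff.2 hx
  rw [← hhom _ (inv_pos.2 hx') x hx]
  exact hmV _ (norm_smul_inv_norm hx)

theorem norm_sub_lt_of_homogeneous {η ε : ℝ} (hη : η ≤ 1 / 2)
    (hcont : ∀ x y : E, 1 / 2 ≤ ‖x‖ → ‖x‖ ≤ 3 / 2 → 1 / 2 ≤ ‖y‖ → ‖y‖ ≤ 3 / 2 →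
      ‖x - y‖ < η → ‖V x - V y‖ < ε)
    {x z : E} (hz : z ≠ 0) (hxz : ‖x - z‖ < η * ‖z‖) : ‖V x - V z‖ < ε := by
  have hR : 0 < ‖z‖ := norm_pos_iff.2 hz
  have hlow := norm_sub_norm_le z x
  have hhigh := norm_sub_norm_le x z
  rw [norm_sub_rev] at hlow
  have hx : x ≠ 0 := norm_pos_iff.1 (by nlinarith)
  have hscale : ∀ y : E, ‖‖z‖⁻¹ • y‖ = ‖y‖ / ‖z‖ := fun y ↦ by
    rw [norm_smul, norm_inv, norm_norm, inv_mul_eq_div]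
  rw [← hhom _ (inv_pos.2 hR) x hx, ← hhom _ (inv_pos.2 hR) z hz]
  apply hcont <;> simp only [hscale, ← smul_sub, div_self hR.ne', le_div_iff₀ hR,
    div_le_iff₀ hR, div_lt_iff₀ hR] <;> nlinarith

end Homogeneous

theorem norm_step_sub_lt_of_homogeneous {E : Type*} [NormedAddCommGroup E] [NormedSpace ℝ E]
    {V S : E → E} (hhom : ∀ c : ℝ, 0 < c → ∀ x : E, x ≠ 0 → V (c • x) = V x)
    {η ε : ℝ} (hη : η ≤ 1 / 2)
    (hcont : ∀ x y : E, 1 / 2 ≤ ‖x‖ → ‖x‖ ≤ 3 / 2 → 1 / 2 ≤ ‖y‖ → ‖y‖ ≤ 3 / 2 →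
      ‖x - y‖ < η → ‖V x - V y‖ < ε)
    {r A : ℝ} (hA : 0 ≤ A) (hS : ∀ x : E, r ≤ ‖x‖ → ‖S x - x - V x‖ ≤ A / ‖x‖)
    {x z : E} (hz : z ≠ 0) (hxz : ‖x - z‖ < η * ‖z‖) (hx : r ≤ ‖x‖) :
    ‖(S x - x) - V z‖ < ε + 2 * A / ‖z‖ := by
  have hR : 0 < ‖z‖ := norm_pos_iff.2 hz
  have hhalf : ‖z‖ / 2 ≤ ‖x‖ := by
    have := norm_sub_norm_le z x
    rw [norm_sub_rev] at this
    nlinarith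
  calc ‖(S x - x) - V z‖ = ‖(V x - V z) + (S x - x - V x)‖ := by congr 1; abel
    _ ≤ ‖V x - V z‖ + ‖S x - x - V x‖ := norm_add_le _ _
    _ < ε + A / ‖x‖ :=
        add_lt_add_of_lt_of_le (norm_sub_lt_of_homogeneous hhom hη hcont hz hxz) (hS x hx)
    _ ≤ ε + A / (‖z‖ / 2) := by gcongr
    _ = ε + 2 * A / ‖z‖ := by ring

theorem stmt13_general {n : ℕ} (V : EuclideanSpace ℝ (Fin n) → EuclideanSpace ℝ (Fin n))
    (hhom : ∀ c : ℝ, 0 < c → ∀ x : EuclideanSpace ℝ (Fin n), x ≠ 0 → V (c • x) = V x)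
    (m : ℝ) (hm : 0 < m)
    (hmV : ∀ u : EuclideanSpace ℝ (Fin n), ‖u‖ = 1 → m ≤ ‖V u‖)
    (η : ℝ) (hη0 : 0 < η) (hη : η < 1 / 2)
    (hcont : ∀ x y : EuclideanSpace ℝ (Fin n),
      1 / 2 ≤ ‖x‖ → ‖x‖ ≤ 3 / 2 → 1 / 2 ≤ ‖y‖ → ‖y‖ ≤ 3 / 2 → ‖x - y‖ < η →
      ‖V x - V y‖ < m / 2)
    (S : EuclideanSpace ℝ (Fin n) → EuclideanSpace ℝ (Fin n))
    (C₁ C δ : ℝ) (hC : 0 < C)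
    (hS1 : ∀ x, ‖S x - x‖ ≤ 2 * C₁)
    (hS2 : ∀ x : EuclideanSpace ℝ (Fin n), 1 / δ ≤ ‖x‖ → ‖S x - x - V x‖ ≤ 6 * C / ‖x‖)
    (k : ℕ) (hk : 1 ≤ k) (z : EuclideanSpace ℝ (Fin n)) (hz : S^[k] z = z) :
    ‖z‖ ≤ max (max (1 / δ + 2 * ((k : ℝ) - 1) * C₁) (2 * ((k : ℝ) - 1) * C₁ / η))
        (24 * C / m) := by
  by_contra! hlarge
  simp only [max_lt_iff] at hlarge
  obtain ⟨⟨hδR, hηR⟩, hmR⟩ := hlarge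
  rw [div_lt_iff₀ hη0] at hηR
  have hR : 0 < ‖z‖ := (div_pos (by positivity) hm).trans hmR
  have hz0 : z ≠ 0 := norm_pos_iff.1 hR
  have hstep (j : ℕ) (hj : j < k) :
      ‖(S (S^[j] z) - S^[j] z) - V z‖ < m / 2 + 2 * (6 * C) / ‖z‖ := by
    have horbit : ‖S^[j] z - z‖ ≤ ((k : ℝ) - 1) * (2 * C₁) := by
      simpa only [dist_eq_norm] using dist_iterate_le_of_lt (f := S) hS1 z hj
    refine norm_step_sub_lt_of_homogeneous hhom hη.le hcont (by positivity) hS2 hz0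
      (by linarith) ?_
    linarith [norm_sub_norm_le z (S^[j] z), norm_sub_rev z (S^[j] z)]
  have hVz_lt := norm_lt_of_forall_norm_sub_lt_of_sum_eq_zero hk
    (IsPeriodicPt.sum_range_sub_eq_zero hz) hstep
  have hVz_ge := le_norm_of_homogeneous hhom hmV hz0
  rw [div_lt_iff₀ hm] at hmR
  have hsmall : m / 2 < 2 * (6 * C) / ‖z‖ := by linarith
  rw [lt_div_iff₀ hR] at hsmall
  linarith

/-- Let `V : ℝ^n\{0} → ℝ^n` be continuous, positively homogeneous of
degree zero, and nonvanishing; let `m > 0` satisfy `m ≤ ‖V u‖` for all unit vectors `u`,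
and let `0 < η < 1/2` be such that for all `x, y` in the spherical shell
`{1/2 ≤ ‖·‖ ≤ 3/2}` with `‖x − y‖ < η` one has `‖V x − V y‖ < m/2`.  Let `S : ℝ^n → ℝ^n`
and `C₁, C, δ > 0` be such that `‖S x − x‖ ≤ 2C₁` for all `x` and
`‖S x − x − V x‖ ≤ 6C/‖x‖` whenever `‖x‖ ≥ 1/δ`.  If `z` is a `k`-periodic point of `S`
for some `k ≥ 1` (`S^[k] z = z`), then
`‖z‖ ≤ max { 1/δ + 2(k−1)C₁, 2(k−1)C₁/η, 24C/m }`: there are no `k`-periodic orbits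
outside the ball of this radius. -/
theorem stmt13 {n : ℕ} (V : EuclideanSpace ℝ (Fin n) → EuclideanSpace ℝ (Fin n))
    (hVcont : ContinuousOn V {(0 : EuclideanSpace ℝ (Fin n))}ᶜ)
    (hhom : ∀ c : ℝ, 0 < c → ∀ x : EuclideanSpace ℝ (Fin n), x ≠ 0 → V (c • x) = V x)
    (m : ℝ) (hm : 0 < m)
    (hmV : ∀ u : EuclideanSpace ℝ (Fin n), ‖u‖ = 1 → m ≤ ‖V u‖)
    (η : ℝ) (hη0 : 0 < η) (hη : η < 1 / 2)
    (hcont : ∀ x y : EuclideanSpace ℝ (Fin n),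
      1 / 2 ≤ ‖x‖ → ‖x‖ ≤ 3 / 2 → 1 / 2 ≤ ‖y‖ → ‖y‖ ≤ 3 / 2 → ‖x - y‖ < η →
      ‖V x - V y‖ < m / 2)
    (S : EuclideanSpace ℝ (Fin n) → EuclideanSpace ℝ (Fin n))
    (C₁ C δ : ℝ) (hC₁ : 0 < C₁) (hC : 0 < C) (hδ : 0 < δ)
    (hS1 : ∀ x, ‖S x - x‖ ≤ 2 * C₁)
    (hS2 : ∀ x : EuclideanSpace ℝ (Fin n), 1 / δ ≤ ‖x‖ → ‖S x - x - V x‖ ≤ 6 * C / ‖x‖)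
    (k : ℕ) (hk : 1 ≤ k) (z : EuclideanSpace ℝ (Fin n)) (hz : S^[k] z = z) :
    ‖z‖ ≤ max (max (1 / δ + 2 * ((k : ℝ) - 1) * C₁) (2 * ((k : ℝ) - 1) * C₁ / η))
        (24 * C / m) :=
  stmt13_general V hhom m hm hmV η hη0 hη hcont S C₁ C δ hC hS1 hS2 k hk z hz
end

section
/- Let f: ℝ^{2d}\{0} → ℝ be differentiable with level set M = {f = 1}, and suppose M is strictly convex in the sense that for all p, q ∈ M with p ≠ q one has ⟨q − p, ∇f(q)⟩ > 0. If q₁, q₂ ∈ M and t₁, t₂ > 0 satisfy q₁ + t₁·J∇f(q₁) = q₂ + t₂·J∇f(q₂), then q₁ = q₂ (and hence t₁ = t₂ provided J∇f(q₁) ≠ 0). In other words, through each point exterior to M there passes at most one positive characteristic ray of M. -/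
open scoped RealInnerProductSpace

section SkewMap

variable {E : Type*} [NormedAddCommGroup E] [InnerProductSpace ℝ E]

theorem LinearIsometry.inner_map_left_eq_neg_of_map_map_eq_neg (J : E →ₗᵢ[ℝ] E)
    (hJ : ∀ v, J (J v) = -v) (u v : E) : ⟪J u, v⟫ = -⟪u, J v⟫ := by
  have h := J.inner_map_map u (J v)
  rw [hJ, inner_neg_right] at h
  exact neg_eq_iff_eq_neg.mp h

variable {J : E → E} (hJ : ∀ u v, ⟪J u, v⟫ = -⟪u, J v⟫)
include hJ

theorem inner_map_self_eq_zero_of_skew (u : E) : ⟪J u, u⟫ = 0 := by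
  have h := hJ u u
  rw [real_inner_comm (J u)] at h
  linarith

/- Both inner products are multiples of `⟪J g₁, g₂⟫`, with coefficients `t₁` and `-t₂`,
so strict convexity at `q₂` and at `q₁` would force it to have both signs. -/
theorem smul_inner_sub_add_smul_inner_sub_eq_zero {q₁ q₂ g₁ g₂ : E} {t₁ t₂ : ℝ}
    (h : q₁ + t₁ • J g₁ = q₂ + t₂ • J g₂) :
    t₂ * ⟪q₂ - q₁, g₂⟫ + t₁ * ⟪q₁ - q₂, g₁⟫ = 0 := by
  have hd : q₂ - q₁ = t₁ • J g₁ - t₂ • J g₂ := by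
    rw [sub_eq_sub_iff_add_eq_add, ← h]; abel
  have hd' : q₁ - q₂ = t₂ • J g₂ - t₁ • J g₁ := by
    rw [← neg_sub, hd]; abel
  have hswap : ⟪J g₂, g₁⟫ = -⟪J g₁, g₂⟫ := by rw [hJ, real_inner_comm]
  rw [hd, hd', inner_sub_left, inner_sub_left, real_inner_smul_left, real_inner_smul_left,
    real_inner_smul_left, real_inner_smul_left, inner_map_self_eq_zero_of_skew hJ,
    inner_map_self_eq_zero_of_skew hJ, hswap]
  ring

end SkewMap

theorem stmt16_general {d : ℕ}
    (J : EuclideanSpace ℝ (Fin (2 * d)) →ₗᵢ[ℝ] EuclideanSpace ℝ (Fin (2 * d)))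
    (hJ : ∀ v, J (J v) = -v)
    (f : EuclideanSpace ℝ (Fin (2 * d)) → ℝ)
    (hconv : ∀ p q : EuclideanSpace ℝ (Fin (2 * d)), f p = 1 → f q = 1 → p ≠ q →
      0 < ⟪q - p, gradient f q⟫)
    (q₁ q₂ : EuclideanSpace ℝ (Fin (2 * d))) (t₁ t₂ : ℝ)
    (hq₁ : f q₁ = 1) (hq₂ : f q₂ = 1) (ht₁ : 0 < t₁) (ht₂ : 0 < t₂)
    (h : q₁ + t₁ • J (gradient f q₁) = q₂ + t₂ • J (gradient f q₂)) :
    q₁ = q₂ ∧ (J (gradient f q₁) ≠ 0 → t₁ = t₂) := by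
  have hskew := J.inner_map_left_eq_neg_of_map_map_eq_neg hJ
  have hq : q₁ = q₂ := by
    by_contra hne
    have h₂ := mul_pos ht₂ (hconv q₁ q₂ hq₁ hq₂ hne)
    have h₁ := mul_pos ht₁ (hconv q₂ q₁ hq₂ hq₁ (Ne.symm hne))
    linarith [smul_inner_sub_add_smul_inner_sub_eq_zero hskew h]
  subst hq
  exact ⟨rfl, fun hv => smul_left_injective ℝ hv (add_left_cancel h)⟩

/-- Let `f : ℝ^{2d}\{0} → ℝ` be differentiable with level set
`M = {f = 1}`, and suppose `M` is strictly convex in the sense that for all `p, q ∈ M`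
with `p ≠ q` one has `⟪q − p, ∇f(q)⟫ > 0`.  If `q₁, q₂ ∈ M` and `t₁, t₂ > 0` satisfy
`q₁ + t₁ • J ∇f(q₁) = q₂ + t₂ • J ∇f(q₂)`, then `q₁ = q₂` (and hence `t₁ = t₂` provided
`J ∇f(q₁) ≠ 0`): through each point exterior to `M` there passes at most one positive
characteristic ray of `M`. -/
theorem stmt16 {d : ℕ}
    (J : EuclideanSpace ℝ (Fin (2 * d)) →ₗᵢ[ℝ] EuclideanSpace ℝ (Fin (2 * d)))
    (hJ : ∀ v, J (J v) = -v)
    (f : EuclideanSpace ℝ (Fin (2 * d)) → ℝ)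
    (hf : ∀ x : EuclideanSpace ℝ (Fin (2 * d)), x ≠ 0 → DifferentiableAt ℝ f x)
    (hconv : ∀ p q : EuclideanSpace ℝ (Fin (2 * d)), f p = 1 → f q = 1 → p ≠ q →
      0 < ⟪q - p, gradient f q⟫)
    (q₁ q₂ : EuclideanSpace ℝ (Fin (2 * d))) (t₁ t₂ : ℝ)
    (hq₁ : f q₁ = 1) (hq₂ : f q₂ = 1) (ht₁ : 0 < t₁) (ht₂ : 0 < t₂)
    (h : q₁ + t₁ • J (gradient f q₁) = q₂ + t₂ • J (gradient f q₂)) :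
    q₁ = q₂ ∧ (J (gradient f q₁) ≠ 0 → t₁ = t₂) :=
  stmt16_general J hJ f hconv q₁ q₂ t₁ t₂ hq₁ hq₂ ht₁ ht₂ h
end
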